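/- arXiv:2402.02853 — 6 statements merged into one kernel-verified Lean document; each statement's English description precedes it below -/
import Mathlib

section
/- Let q be a power of 2 and let n be an odd positive integer. Let g1(x) and g2(x) be monic divisors of x^n − 1 in F_q[x]. Let C1 be the cyclic code of length n over F_q with generator polynomial g1(x), and let C2 be the cyclic code of length n over F_q generated by the polynomial g1(x)g2(x), i.e., the cyclic code with generator polynomial g1(x)g2(x)/gcd(g1(x), g2(x)). Then the Plotkin sum Plotkin(C1, C2) = {(u | u + v) : u ∈ C1, v ∈ C2} ⊆ F_q^{2n} is permutation-equivalent to the cyclic code of length 2n over F_q generated by g1(x)^2 g2(x): there exists a permutation σ of the 2n coordinate positions such that applying σ to the coordinates of all codewords of Plotkin(C1, C2) yields exactly the set of codewords of that cyclic code. -/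
open Polynomial

/-- The cyclic code of length `N` over the field `F` generated by the polynomial `g`.
Codewords are identified with the representatives of degree `< N` of the elements of the
ideal generated by `g` in `F[x]/(x^N - 1)`; equivalently, a polynomial `c` of degree `< N`
is a codeword iff `c ∈ (g, x^N - 1)` as an ideal of `F[x]`. -/
noncomputable def cyclicCode (F : Type*) [Field F] (N : ℕ) (g : Polynomial F) :
    Submodule F (Polynomial F) :=
  Polynomial.degreeLT F N ⊓
    Submodule.restrictScalars F (Ideal.span ({g, Polynomial.X ^ N - 1} : Set (Polynomial F)))

/-- The minimum distance (equivalently, the minimum Hamming weight of a nonzero codeword,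
a codeword being identified with its coefficient vector) of a linear code of polynomials. -/
noncomputable def minDist {F : Type*} [Field F] (C : Submodule F (Polynomial F)) : ℕ :=
  sInf {w | ∃ c ∈ C, c ≠ 0 ∧ c.support.card = w}

/-- The coefficient vector in `F^N` of a polynomial. -/
def polyToVec {F : Type*} [Field F] (N : ℕ) (c : Polynomial F) : Fin N → F :=
  fun i => c.coeff (i : ℕ)

/-- The set of codewords of the cyclic code of length `N` generated by `g`,
viewed as vectors in `F^N`. -/
noncomputable def vecCode (F : Type*) [Field F] (N : ℕ) (g : Polynomial F) :
    Set (Fin N → F) :=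
  polyToVec N '' (cyclicCode F N g : Set (Polynomial F))

/-- The concatenation `(u | v) ∈ F^{2n}` of two vectors `u, v ∈ F^n`. -/
def concatVec {F : Type*} {n : ℕ} (u v : Fin n → F) : Fin (2 * n) → F :=
  fun i =>
    if h : (i : ℕ) < n then u ⟨(i : ℕ), h⟩
    else v ⟨(i : ℕ) - n, by have := i.isLt; omega⟩

/-! ### Auxiliary material -/

namespace VanLintAux

variable {F : Type*} [Field F]

/-- The polynomial with coefficient vector `y`. -/
noncomputable def vecToPoly (N : ℕ) (y : Fin N → F) : Polynomial F :=
  ∑ i : Fin N, C (y i) * X ^ (i : ℕ)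

lemma vecToPoly_coeff (N : ℕ) (y : Fin N → F) (m : ℕ) :
    (vecToPoly N y).coeff m = if h : m < N then y ⟨m, h⟩ else 0 := by
  classical
  unfold vecToPoly
  rw [finset_sum_coeff]
  simp only [coeff_C_mul, coeff_X_pow]
  split
  · next h =>
    rw [Finset.sum_eq_single (⟨m, h⟩ : Fin N)]
    · simp
    · intro b _ hb
      have : ¬ (m = (b : ℕ)) := by
        intro he; exact hb (by apply Fin.ext; simp [he])
      simp [this]
    · simp
  · next h =>
    apply Finset.sum_eq_zero
    intro b _
    have : ¬ (m = (b : ℕ)) := by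
      intro he; exact h (by omega)
    simp [this]

lemma vecToPoly_mem_degreeLT (N : ℕ) (y : Fin N → F) :
    vecToPoly N y ∈ degreeLT F N := by
  unfold vecToPoly
  apply Submodule.sum_mem
  intro i _
  rw [mem_degreeLT]
  exact lt_of_le_of_lt (degree_C_mul_X_pow_le _ _) (by exact_mod_cast i.isLt)

lemma polyToVec_vecToPoly (N : ℕ) (y : Fin N → F) :
    polyToVec N (vecToPoly N y) = y := by
  funext i
  unfold polyToVec
  rw [vecToPoly_coeff, dif_pos i.isLt]

lemma vecToPoly_polyToVec {N : ℕ} {c : Polynomial F} (hc : c ∈ degreeLT F N) :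
    vecToPoly N (polyToVec N c) = c := by
  rw [mem_degreeLT] at hc
  apply Polynomial.ext
  intro m
  rw [vecToPoly_coeff]
  split
  · rfl
  · next h =>
    symm
    apply coeff_eq_zero_of_degree_lt
    exact lt_of_lt_of_le hc (by exact_mod_cast Nat.cast_le.mpr (by omega))

lemma polyToVec_add (N : ℕ) (c d : Polynomial F) :
    polyToVec N (c + d) = polyToVec N c + polyToVec N d := by
  funext i; simp [polyToVec]

/-- `X^n - 1` divides `X^a - X^(a % n)`. -/
lemma dvd_pow_mod (n a : ℕ) : (X ^ n - 1 : Polynomial F) ∣ X ^ a - X ^ (a % n) := by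
  have h : (X ^ a : Polynomial F) = X ^ (a % n) * (X ^ n) ^ (a / n) := by
    rw [← pow_mul, ← pow_add]
    congr 1
    exact (Nat.mod_add_div a n).symm
  rw [h]
  obtain ⟨k, hk⟩ := sub_dvd_pow_sub_pow (X ^ n : Polynomial F) 1 (a / n)
  refine ⟨X ^ (a % n) * k, ?_⟩
  rw [one_pow] at hk
  calc X ^ (a % n) * (X ^ n) ^ (a / n) - X ^ (a % n)
      = X ^ (a % n) * ((X ^ n) ^ (a / n) - 1) := by ring
    _ = X ^ (a % n) * ((X ^ n - 1) * k) := by rw [hk]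
    _ = (X ^ n - 1) * (X ^ (a % n) * k) := by ring

/-- Composition congruence: `a - b ∣ h.comp a - h.comp b`. -/
lemma comp_sub_dvd (h a b : Polynomial F) : (a - b) ∣ h.comp a - h.comp b := by
  have := Polynomial.sub_dvd_eval_sub a b (h.map Polynomial.C)
  unfold Polynomial.comp
  rw [Polynomial.eval₂_eq_eval_map, Polynomial.eval₂_eq_eval_map]
  exact this

/-- Membership in `span {g, p}` when `g ∣ p` is just divisibility by `g`. -/
lemma mem_span_pair_iff_dvd {g p c : Polynomial F} (hgp : g ∣ p) :
    c ∈ Ideal.span ({g, p} : Set (Polynomial F)) ↔ g ∣ c := by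
  rw [Ideal.mem_span_pair]
  constructor
  · rintro ⟨a, b, rfl⟩
    obtain ⟨k, rfl⟩ := hgp
    exact ⟨a + b * k, by ring⟩
  · rintro ⟨t, rfl⟩
    exact ⟨t, 0, by ring⟩

lemma mem_span_pair_congr {g p c c' : Polynomial F} (h : p ∣ c - c') :
    c ∈ Ideal.span ({g, p} : Set (Polynomial F)) ↔
      c' ∈ Ideal.span ({g, p} : Set (Polynomial F)) := by
  obtain ⟨k, hk⟩ := h
  have hp : p ∈ Ideal.span ({g, p} : Set (Polynomial F)) :=
    Ideal.subset_span (by simp)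
  constructor
  · intro hc
    have : c' = c - p * k := by rw [← hk]; ring
    rw [this]
    exact Ideal.sub_mem _ hc (Ideal.mul_mem_right _ _ hp)
  · intro hc
    have : c = c' + p * k := by rw [← hk]; ring
    rw [this]
    exact Ideal.add_mem _ hc (Ideal.mul_mem_right _ _ hp)

/-- A generator of the ideal `(a, b)` in `F[x]`. -/
lemma exists_span_pair_gen (a b : Polynomial F) :
    ∃ d : Polynomial F, ∀ c, (c ∈ Ideal.span ({a, b} : Set (Polynomial F)) ↔ d ∣ c) := by
  obtain ⟨d, hd⟩ := (IsPrincipalIdealRing.principal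
    (Ideal.span ({a, b} : Set (Polynomial F)))).principal
  refine ⟨d, fun c => ?_⟩
  rw [show Ideal.span ({a, b} : Set (Polynomial F)) = Ideal.span {d} from hd,
    Ideal.mem_span_singleton]

lemma isCoprime_of_squarefree_mul {a b : Polynomial F} (h : Squarefree (a * b)) :
    IsCoprime a b :=
  ((squarefree_mul_iff.mp h).1).isCoprime

section CharTwoSec
variable [CharP F 2]

lemma two_eq_zero_poly : (2 : Polynomial F) = 0 := by
  rw [show (2 : Polynomial F) = ((2 : ℕ) : Polynomial F) by norm_num,
    ← Polynomial.C_eq_natCast, show ((2 : ℕ) : F) = 0 from CharP.cast_eq_zero F 2, map_zero]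

lemma pXsq (n : ℕ) : (X ^ n - 1 : Polynomial F) * (X ^ n - 1) = X ^ (2 * n) - 1 := by
  have h2 : (2 : Polynomial F) = 0 := two_eq_zero_poly
  have hx : (X : Polynomial F) ^ (2 * n) = X ^ n * X ^ n := by rw [two_mul, pow_add]
  rw [hx]
  linear_combination (1 - (X : Polynomial F) ^ n) * h2

/-- The core algebraic lemma in characteristic two. -/
lemma core {p g1 g2 S A B : Polynomial F}
    (hp : Squarefree p) (hXp : IsCoprime X p)
    (h1 : g1 ∣ p) (h2 : g2 ∣ p) (hS : S * S = X * p + X) :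
    A * A + X * (B * B) ∈ Ideal.span ({g1 * g1 * g2, p * p} : Set (Polynomial F)) ↔
      (g1 ∣ A ∧ A + S * B ∈ Ideal.span ({g1 * g2, p} : Set (Polynomial F))) := by
  have htwo : (2 : Polynomial F) = 0 := two_eq_zero_poly
  have hpne : p ≠ 0 := hp.ne_zero
  have hg1ne : g1 ≠ 0 := ne_zero_of_dvd_ne_zero hpne h1
  have hg1X : IsCoprime g1 X := (hXp.of_isCoprime_of_dvd_right h1).symm
  have hg1sq : Squarefree g1 := Squarefree.squarefree_of_dvd h1 hp
  constructor
  · intro hmem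
    rw [Ideal.mem_span_pair] at hmem
    obtain ⟨H, E, hHE⟩ := hmem
    obtain ⟨L, hL⟩ := exists_span_pair_gen (g1 * g2) p
    have hLg : L ∣ g1 * g2 := (hL _).mp (Ideal.subset_span (by simp))
    have hLp : L ∣ p := (hL _).mp (Ideal.subset_span (by simp))
    have hg1L : g1 ∣ L := by
      have hmem' : L ∈ Ideal.span ({g1 * g2, p} : Set (Polynomial F)) := (hL L).mpr dvd_rfl
      rw [Ideal.mem_span_pair] at hmem'
      obtain ⟨a, b, hab⟩ := hmem'
      obtain ⟨k, hk⟩ := h1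
      exact ⟨a * g2 + b * k, by rw [← hab, hk]; ring⟩
    have hW2 : (A + S * B) * (A + S * B) = A * A + X * (B * B) + X * (p * (B * B)) := by
      linear_combination (B * B) * hS + (A * S * B) * htwo
    obtain ⟨l1, hl1⟩ := hLg
    obtain ⟨l2, hl2⟩ := hLp
    have hLW2 : L ∣ (A + S * B) * (A + S * B) := by
      refine ⟨H * (g1 * l1) + E * (l2 * p) + X * (l2 * (B * B)), ?_⟩
      rw [hW2, ← hHE]
      linear_combination (H * g1) * hl1 + (E * p + X * (B * B)) * hl2
    have hLW : L ∣ (A + S * B) :=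
      (Squarefree.squarefree_of_dvd (⟨l2, hl2⟩ : L ∣ p) hp).isRadical 2 _ (by rw [pow_two]; exact hLW2)
    refine ⟨?_, (hL _).mpr hLW⟩
    obtain ⟨ω, hω⟩ := hLW
    obtain ⟨k, hk⟩ := h1
    obtain ⟨c, hc⟩ := hg1L
    have hXpB : g1 * g1 ∣ X * (p * (B * B)) := by
      refine ⟨c * ω * (c * ω) - (H * g2 + E * (k * k)), ?_⟩
      have hstep : X * (p * (B * B)) = (A + S * B) * (A + S * B) - (A * A + X * (B * B)) := by
        linear_combination - hW2
      rw [hstep, ← hHE, hω, hc, hk]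
      ring
    obtain ⟨t, ht⟩ := hXpB
    have hg1XkB : g1 ∣ X * (k * (B * B)) := by
      refine ⟨t, mul_left_cancel₀ hg1ne ?_⟩
      rw [hk] at ht
      linear_combination ht
    have hg1k : IsCoprime g1 k := by
      apply isCoprime_of_squarefree_mul
      rw [← hk]; exact hp
    have hB2 : g1 ∣ B * B := hg1k.dvd_of_dvd_mul_left (hg1X.dvd_of_dvd_mul_left hg1XkB)
    have hB : g1 ∣ B := hg1sq.isRadical 2 B (by rw [pow_two]; exact hB2)
    obtain ⟨b, hb⟩ := hB
    refine ⟨c * ω - S * b, ?_⟩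
    rw [show A = (A + S * B) - S * B by ring, hω, hc, hb]
    ring
  · rintro ⟨⟨a, ha⟩, hW⟩
    rw [Ideal.mem_span_pair] at hW ⊢
    obtain ⟨m, β, hmβ⟩ := hW
    obtain ⟨k, hk⟩ := h1
    have hg1SB : g1 ∣ S * B := by
      refine ⟨m * g2 + β * k - a, ?_⟩
      rw [show S * B = m * (g1 * g2) + β * p - A by linear_combination - hmβ, ha, hk]
      ring
    have hScop : IsCoprime g1 S := by
      have h1' : IsCoprime g1 (p + 1) := ⟨-k, 1, by rw [hk]; ring⟩
      have hSS : IsCoprime g1 (S * S) := by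
        rw [hS, show (X : Polynomial F) * p + X = X * (p + 1) by ring]
        exact hg1X.mul_right h1'
      exact hSS.of_mul_right_left
    have hB : g1 ∣ B := hScop.dvd_of_dvd_mul_left hg1SB
    obtain ⟨b, hb⟩ := hB
    obtain ⟨h2w, hh2⟩ := h2
    refine ⟨g2 * (m * m) + X * (h2w * (b * b)), β * β, ?_⟩
    linear_combination (m * (g1 * g2) + β * p + A + S * B) * hmβ + (B * B) * hS +
      (X * (B * B)) * hh2 + (X * g2 * h2w * (B + g1 * b)) * hb +
      (X * (h2w * (b * b)) * (g1 * g1) * g2 - m * (g1 * g2) * (β * p) + A * S * B) * htwo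

end CharTwoSec

section FrobSec
variable [CharP F 2] [Fintype F]

/-- Coefficientwise Frobenius on polynomials, as a ring equivalence. -/
noncomputable def Phi : Polynomial F ≃+* Polynomial F :=
  Polynomial.mapEquiv (frobeniusEquiv F 2)

lemma Phi_apply (f : Polynomial F) : Phi f = f.map (frobenius F 2) := rfl

lemma Phi_X_pow (k : ℕ) : Phi (X ^ k : Polynomial F) = X ^ k := by
  simp [Phi_apply]

lemma Phi_XnSub1 (n : ℕ) : Phi (X ^ n - 1 : Polynomial F) = X ^ n - 1 := by
  simp [Phi_apply]

lemma Phi_dvd {a b : Polynomial F} : Phi a ∣ Phi b ↔ a ∣ b :=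
  map_dvd_iff (Phi : Polynomial F ≃+* Polynomial F)

lemma Phi_mem_span_pair {x y z : Polynomial F} :
    Phi z ∈ Ideal.span ({Phi x, Phi y} : Set (Polynomial F)) ↔
      z ∈ Ideal.span ({x, y} : Set (Polynomial F)) := by
  rw [Ideal.mem_span_pair, Ideal.mem_span_pair]
  constructor
  · rintro ⟨a, b, h⟩
    refine ⟨Phi.symm a, Phi.symm b, ?_⟩
    have h2 := congrArg Phi.symm h
    simpa [map_add, map_mul] using h2
  · rintro ⟨a, b, h⟩
    exact ⟨Phi a, Phi b, by rw [← map_mul, ← map_mul, ← map_add, h]⟩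

lemma expand_Phi (h : Polynomial F) : expand F 2 (Phi h) = h ^ 2 := by
  rw [Phi_apply, ← map_expand, map_frobenius_expand]

end FrobSec

section MsSec

variable (n s : ℕ)

/-- The multiplier map on coefficient level. -/
noncomputable def Ms (f : Polynomial F) : Polynomial F :=
  vecToPoly n (fun j => f.coeff (2 * (j : ℕ) % n))

noncomputable def Mso (f : Polynomial F) : Polynomial F :=
  vecToPoly n (fun j => f.coeff ((2 * (j : ℕ) + 1) % n))

lemma Ms_add (f g : Polynomial F) : Ms n (f + g) = Ms n f + Ms n g := by
  unfold Ms vecToPoly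
  rw [← Finset.sum_add_distrib]
  apply Finset.sum_congr rfl
  intro j _
  simp only [coeff_add, C_add]
  ring

lemma mod_id1 (h2s : 2 * s = n + 1) (m : ℕ) : (2 * (s * m % n)) % n = m % n := by
  have h : (2 * (s * m % n)) % n = (2 * (s * m)) % n := (Nat.mod_modEq (s * m) n).mul_left 2
  rw [h, ← mul_assoc, h2s, show (n + 1) * m = m + m * n by ring, Nat.add_mul_mod_self_right]

lemma mod_id2 (h2s : 2 * s = n + 1) (j : ℕ) : (2 * ((j + s) % n)) % n = (2 * j + 1) % n := by
  have h : (2 * ((j + s) % n)) % n = (2 * (j + s)) % n := (Nat.mod_modEq (j + s) n).mul_left 2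
  rw [h, show 2 * (j + s) = (2 * j + 1) + n by omega, Nat.add_mod_right]

/-- The permutation `m ↦ s*m % n` of `Fin n`. -/
noncomputable def eqvS (hn : 0 < n) (h2s : 2 * s = n + 1) : Fin n ≃ Fin n :=
  Equiv.ofBijective (fun m => (⟨s * (m : ℕ) % n, Nat.mod_lt _ hn⟩ : Fin n))
    (Finite.injective_iff_bijective.mp (by
      intro a b hab
      have h' : s * (a : ℕ) % n = s * (b : ℕ) % n := congrArg Fin.val hab
      have ha := mod_id1 n s h2s (a : ℕ)
      have hb := mod_id1 n s h2s (b : ℕ)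
      rw [h'] at ha
      rw [ha, Nat.mod_eq_of_lt a.isLt, Nat.mod_eq_of_lt b.isLt] at hb
      exact Fin.ext hb))

lemma eqvS_apply (hn : 0 < n) (h2s : 2 * s = n + 1) (m : Fin n) :
    ((eqvS n s hn h2s) m : ℕ) = s * (m : ℕ) % n := rfl

/-- The permutation `j ↦ (j+s) % n` of `Fin n`. -/
noncomputable def eqvA (hn : 0 < n) : Fin n ≃ Fin n :=
  Equiv.ofBijective (fun j => (⟨((j : ℕ) + s) % n, Nat.mod_lt _ hn⟩ : Fin n))
    (Finite.injective_iff_bijective.mp (by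
      intro a b hab
      have h' : ((a : ℕ) + s) % n = ((b : ℕ) + s) % n := congrArg Fin.val hab
      have := Nat.ModEq.add_right_cancel' s (h' : ((a : ℕ) + s) ≡ ((b : ℕ) + s) [MOD n])
      apply Fin.ext
      rw [Nat.ModEq, Nat.mod_eq_of_lt a.isLt, Nat.mod_eq_of_lt b.isLt] at this
      exact this))

lemma eqvA_apply (hn : 0 < n) (j : Fin n) :
    ((eqvA n s hn) j : ℕ) = ((j : ℕ) + s) % n := rfl

lemma Ms_vecToPoly_eq (hn : 0 < n) (h2s : 2 * s = n + 1) (y : Fin n → F) :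
    Ms n (vecToPoly n y) = ∑ m : Fin n, C (y m) * X ^ (s * (m : ℕ) % n) := by
  have hMs : Ms n (vecToPoly n y) =
      ∑ j : Fin n, C ((vecToPoly n y).coeff (2 * (j : ℕ) % n)) * X ^ (j : ℕ) := rfl
  rw [hMs]
  refine (Fintype.sum_equiv (eqvS n s hn h2s)
    (fun m => C (y m) * X ^ (s * (m : ℕ) % n))
    (fun j => C ((vecToPoly n y).coeff (2 * (j : ℕ) % n)) * X ^ (j : ℕ)) ?_).symm
  intro m
  show C (y m) * X ^ (s * (m : ℕ) % n) =
    C ((vecToPoly n y).coeff (2 * (s * (m : ℕ) % n) % n)) * X ^ (s * (m : ℕ) % n)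
  rw [mod_id1 n s h2s, Nat.mod_eq_of_lt m.isLt, vecToPoly_coeff, dif_pos m.isLt]

lemma comp_vecToPoly (y : Fin n → F) :
    (vecToPoly n y).comp (X ^ s) = ∑ m : Fin n, C (y m) * X ^ (s * (m : ℕ)) := by
  unfold vecToPoly Polynomial.comp
  rw [Polynomial.eval₂_finset_sum]
  apply Finset.sum_congr rfl
  intro m _
  rw [Polynomial.eval₂_mul, Polynomial.eval₂_C, Polynomial.eval₂_X_pow, ← pow_mul]

lemma Xs_mul_Mso (hn : 0 < n) (y : Fin n → F) :
    X ^ s * Mso n (vecToPoly n y) =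
      ∑ j : Fin n, C (y ⟨(2 * (j : ℕ) + 1) % n, Nat.mod_lt _ hn⟩) * X ^ ((j : ℕ) + s) := by
  have hMso : Mso n (vecToPoly n y) =
      ∑ j : Fin n, C ((vecToPoly n y).coeff ((2 * (j : ℕ) + 1) % n)) * X ^ (j : ℕ) := rfl
  rw [hMso, Finset.mul_sum]
  apply Finset.sum_congr rfl
  intro j _
  rw [vecToPoly_coeff, dif_pos (Nat.mod_lt _ hn)]
  ring

lemma Ms_vecToPoly_eq2 (hn : 0 < n) (h2s : 2 * s = n + 1) (y : Fin n → F) :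
    Ms n (vecToPoly n y) =
      ∑ j : Fin n, C (y ⟨(2 * (j : ℕ) + 1) % n, Nat.mod_lt _ hn⟩) * X ^ (((j : ℕ) + s) % n) := by
  have hMs : Ms n (vecToPoly n y) =
      ∑ j : Fin n, C ((vecToPoly n y).coeff (2 * (j : ℕ) % n)) * X ^ (j : ℕ) := rfl
  rw [hMs]
  refine (Fintype.sum_equiv (eqvA n s hn)
    (fun j => C (y ⟨(2 * (j : ℕ) + 1) % n, Nat.mod_lt _ hn⟩) * X ^ (((j : ℕ) + s) % n))
    (fun j => C ((vecToPoly n y).coeff (2 * (j : ℕ) % n)) * X ^ (j : ℕ)) ?_).symm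
  intro j
  show C (y ⟨(2 * (j : ℕ) + 1) % n, Nat.mod_lt _ hn⟩) * X ^ (((j : ℕ) + s) % n) =
    C ((vecToPoly n y).coeff (2 * (((j : ℕ) + s) % n) % n)) * X ^ (((j : ℕ) + s) % n)
  rw [mod_id2 n s h2s, vecToPoly_coeff, dif_pos (Nat.mod_lt _ hn)]

lemma cong1 (hn : 0 < n) (h2s : 2 * s = n + 1) (y : Fin n → F) :
    (X ^ n - 1 : Polynomial F) ∣ (vecToPoly n y).comp (X ^ s) - Ms n (vecToPoly n y) := by
  rw [comp_vecToPoly, Ms_vecToPoly_eq n s hn h2s, ← Finset.sum_sub_distrib]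
  apply Finset.dvd_sum
  intro m _
  rw [← mul_sub]
  exact (dvd_pow_mod n (s * (m : ℕ))).mul_left _

lemma cong2 (hn : 0 < n) (h2s : 2 * s = n + 1) (y : Fin n → F) :
    (X ^ n - 1 : Polynomial F) ∣ X ^ s * Mso n (vecToPoly n y) - Ms n (vecToPoly n y) := by
  rw [Xs_mul_Mso n s hn, Ms_vecToPoly_eq2 n s hn h2s, ← Finset.sum_sub_distrib]
  apply Finset.dvd_sum
  intro j _
  rw [← mul_sub]
  exact (dvd_pow_mod n ((j : ℕ) + s)).mul_left _

end MsSec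

section KeyMSec
variable [CharP F 2] [Fintype F]

lemma keyM (n s : ℕ) (hn : 0 < n) (h2s : 2 * s = n + 1)
    (hsqf : Squarefree (X ^ n - 1 : Polynomial F)) {d f : Polynomial F}
    (hd : d ∣ X ^ n - 1) (hf : f ∈ degreeLT F n) :
    Phi d ∣ Ms n f ↔ d ∣ f := by
  have hc1 : (X ^ n - 1 : Polynomial F) ∣ f.comp (X ^ s) - Ms n f := by
    have h := cong1 n s hn h2s (polyToVec n f)
    rwa [vecToPoly_polyToVec hf] at h
  have hPhip : Phi d ∣ (X ^ n - 1 : Polynomial F) := by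
    rw [← Phi_XnSub1 n]; exact Phi_dvd.mpr hd
  have hpcomp : (X ^ n - 1 : Polynomial F) ∣ (X ^ n - 1 : Polynomial F).comp (X ^ 2) := by
    refine ⟨X ^ n + 1, ?_⟩
    rw [sub_comp, X_pow_comp, one_comp, ← pow_mul, two_mul, pow_add]
    ring
  have hfcomp : ∀ g : Polynomial F,
      (X ^ n - 1 : Polynomial F) ∣ g.comp (X ^ (2 * s)) - g := by
    intro g
    have h1 := comp_sub_dvd g (X ^ (2 * s)) X
    rw [comp_X] at h1
    exact dvd_trans ⟨X, by rw [h2s, pow_succ]; ring⟩ h1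
  constructor
  · rintro ⟨t, ht⟩
    have hexp : expand F 2 (Ms n f) = d ^ 2 * expand F 2 t := by
      rw [ht, map_mul, expand_Phi]
    have hdvd1 : d ∣ expand F 2 (Ms n f) := ⟨d * expand F 2 t, by rw [hexp]; ring⟩
    obtain ⟨r, hr⟩ := hc1
    have h3 : (f.comp (X ^ s)).comp (X ^ 2) = f.comp (X ^ (2 * s)) := by
      rw [comp_assoc, X_pow_comp, ← pow_mul]
    have hcompMs : (Ms n f).comp (X ^ 2) =
        f.comp (X ^ (2 * s)) -
          ((X ^ n - 1 : Polynomial F).comp (X ^ 2)) * (r.comp (X ^ 2)) := by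
      have h2 := congrArg (fun q : Polynomial F => q.comp (X ^ 2)) hr
      simp only [sub_comp, mul_comp, one_comp, X_pow_comp] at h2
      rw [h3] at h2
      rw [sub_comp, one_comp, X_pow_comp]
      linear_combination - h2
    have hptot : (X ^ n - 1 : Polynomial F) ∣ (Ms n f).comp (X ^ 2) - f := by
      rw [hcompMs]
      obtain ⟨u1, hu1⟩ := hfcomp f
      obtain ⟨u2, hu2⟩ := hpcomp
      exact ⟨u1 - u2 * (r.comp (X ^ 2)),
        by linear_combination hu1 - (r.comp (X ^ 2)) * hu2⟩
    rw [expand_eq_comp_X_pow] at hdvd1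
    obtain ⟨w, hw⟩ := hptot
    obtain ⟨q2, hq2⟩ := hd
    have hfe : f = (Ms n f).comp (X ^ 2) - (X ^ n - 1) * w := by linear_combination - hw
    rw [hfe]
    exact dvd_sub hdvd1 (by rw [hq2]; exact ⟨q2 * w, by ring⟩)
  · rintro ⟨t, ht⟩
    obtain ⟨r, hr⟩ := hc1
    have hsq1 : (X ^ n - 1 : Polynomial F) ∣
        (Ms n f) * (Ms n f) - (f.comp (X ^ s)) * (f.comp (X ^ s)) :=
      ⟨-(r * (f.comp (X ^ s) + Ms n f)),
        by linear_combination (-(f.comp (X ^ s) + Ms n f)) * hr⟩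
    have hdc : (d.comp (X ^ s)) * (d.comp (X ^ s)) = (Phi d).comp (X ^ (2 * s)) := by
      have h1 : expand F 2 (Phi (d.comp (X ^ s))) = (d.comp (X ^ s)) ^ 2 := expand_Phi _
      rw [expand_eq_comp_X_pow] at h1
      have h2 : Phi (d.comp (X ^ s)) = (Phi d).comp (X ^ s) := by
        rw [Phi_apply, Phi_apply, Polynomial.map_comp]
        congr 1
        simp
      rw [h2, comp_assoc, X_pow_comp, ← pow_mul] at h1
      rw [← pow_two]
      exact h1.symm
    have hPdc := hfcomp (Phi d)
    have hcomb : (X ^ n - 1 : Polynomial F) ∣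
        (Ms n f) * (Ms n f) - Phi d * ((t.comp (X ^ s)) * (t.comp (X ^ s))) := by
      obtain ⟨w1, hw1⟩ := hsq1
      obtain ⟨w2, hw2⟩ := hPdc
      have hft : f.comp (X ^ s) = d.comp (X ^ s) * t.comp (X ^ s) := by
        rw [ht, mul_comp]
      refine ⟨w1 + (t.comp (X ^ s) * t.comp (X ^ s)) * w2, ?_⟩
      linear_combination hw1 + (t.comp (X ^ s) * t.comp (X ^ s)) * hw2 +
        (t.comp (X ^ s) * t.comp (X ^ s)) * hdc +
        (f.comp (X ^ s) + d.comp (X ^ s) * t.comp (X ^ s)) * hft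
    have hPdMs2 : Phi d ∣ (Ms n f) * (Ms n f) := by
      obtain ⟨w, hw⟩ := hcomb
      obtain ⟨q2, hq2⟩ := hPhip
      refine ⟨t.comp (X ^ s) * t.comp (X ^ s) + q2 * w, ?_⟩
      linear_combination hw + w * hq2
    exact (Squarefree.squarefree_of_dvd hPhip hsqf).isRadical 2 (Ms n f)
      (by rw [pow_two]; exact hPdMs2)

end KeyMSec

section PD

lemma parity_decomp (n : ℕ) (y : Fin (2 * n) → F) :
    vecToPoly (2 * n) y =
      expand F 2 (vecToPoly n (fun j => y ⟨2 * (j : ℕ), by have := j.isLt; omega⟩)) +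
        X * expand F 2 (vecToPoly n (fun j => y ⟨2 * (j : ℕ) + 1, by have := j.isLt; omega⟩)) := by
  have hXmul : ∀ (g : Polynomial F) (m : ℕ),
      (X * g).coeff m = if m = 0 then 0 else g.coeff (m - 1) := by
    intro g m
    cases m with
    | zero => simp [mul_coeff_zero]
    | succ m => rw [coeff_X_mul]; simp
  apply Polynomial.ext
  intro m
  rw [coeff_add, vecToPoly_coeff, coeff_expand (by norm_num), hXmul,
    coeff_expand (by norm_num)]
  rcases Nat.even_or_odd m with hme | hmo
  · obtain ⟨k, hk⟩ := hme
    have hm : m = 2 * k := by omega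
    subst hm
    rw [if_pos (by omega : (2:ℕ) ∣ 2 * k), show 2 * k / 2 = k by omega, vecToPoly_coeff]
    have hz : (if 2 * k = 0 then (0 : F) else if 2 ∣ (2 * k - 1) then
        (vecToPoly n (fun j => y ⟨2 * (j : ℕ) + 1, by have := j.isLt; omega⟩)).coeff
          ((2 * k - 1) / 2) else 0) = 0 := by
      rcases eq_or_ne (2 * k) 0 with h | h
      · simp [h]
      · rw [if_neg h, if_neg (by omega)]
    rw [hz, add_zero]
    by_cases hlt : k < n
    · rw [dif_pos hlt, dif_pos (by omega : 2 * k < 2 * n)]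
    · rw [dif_neg hlt, dif_neg (by omega)]
  · obtain ⟨k, hk⟩ := hmo
    subst hk
    rw [if_neg (by omega : ¬ (2 : ℕ) ∣ 2 * k + 1), zero_add,
      if_neg (by omega : ¬ (2 * k + 1 = 0)),
      if_pos (by omega : (2:ℕ) ∣ (2 * k + 1 - 1)),
      show (2 * k + 1 - 1) / 2 = k by omega, vecToPoly_coeff]
    by_cases hlt : k < n
    · rw [dif_pos hlt, dif_pos (by omega : 2 * k + 1 < 2 * n)]
    · rw [dif_neg hlt, dif_neg (by omega)]

end PD

section Central
variable [CharP F 2] [Fintype F]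

lemma central (n s : ℕ) (hn : 0 < n) (h2s : 2 * s = n + 1)
    (hsqf : Squarefree (X ^ n - 1 : Polynomial F))
    (hXp : IsCoprime (X : Polynomial F) (X ^ n - 1))
    {g1 g2 : Polynomial F} (hd1 : g1 ∣ X ^ n - 1) (hd2 : g2 ∣ X ^ n - 1)
    {uP vP : Polynomial F} (hu : uP ∈ degreeLT F n) (hv : vP ∈ degreeLT F n) :
    expand F 2 (Ms n uP) + X * expand F 2 (Mso n (uP + vP)) ∈
        Ideal.span ({g1 ^ 2 * g2, X ^ (2 * n) - 1} : Set (Polynomial F)) ↔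
      (g1 ∣ uP ∧ vP ∈ Ideal.span ({g1 * g2, X ^ n - 1} : Set (Polynomial F))) := by
  have hPA : Phi (Phi.symm (Ms n uP)) = Ms n uP := Phi.apply_symm_apply _
  have hPB : Phi (Phi.symm (Mso n (uP + vP))) = Mso n (uP + vP) := Phi.apply_symm_apply _
  set A := Phi.symm (Ms n uP) with hAdef
  set B := Phi.symm (Mso n (uP + vP)) with hBdef
  have hc : expand F 2 (Ms n uP) + X * expand F 2 (Mso n (uP + vP)) = A * A + X * (B * B) := by
    rw [← hPA, ← hPB, expand_Phi, expand_Phi, pow_two, pow_two]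
  rw [hc]
  have hspan : Ideal.span ({g1 ^ 2 * g2, X ^ (2 * n) - 1} : Set (Polynomial F)) =
      Ideal.span ({g1 * g1 * g2, (X ^ n - 1) * (X ^ n - 1)} : Set (Polynomial F)) := by
    rw [show g1 ^ 2 * g2 = g1 * g1 * g2 by ring, pXsq n]
  rw [hspan]
  have hS : (X : Polynomial F) ^ s * X ^ s = X * (X ^ n - 1) + X := by
    rw [← pow_add, show s + s = n + 1 by omega, pow_succ]
    ring
  rw [core hsqf hXp hd1 hd2 hS]
  have hcond1 : g1 ∣ A ↔ g1 ∣ uP := by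
    rw [← Phi_dvd, hPA]
    exact keyM n s hn h2s hsqf hd1 hu
  have hcond2 : A + X ^ s * B ∈ Ideal.span ({g1 * g2, X ^ n - 1} : Set (Polynomial F)) ↔
      vP ∈ Ideal.span ({g1 * g2, X ^ n - 1} : Set (Polynomial F)) := by
    have hPhiW : Phi (A + X ^ s * B) = Ms n uP + X ^ s * Mso n (uP + vP) := by
      rw [map_add, map_mul, Phi_X_pow, hPA, hPB]
    rw [← Phi_mem_span_pair, hPhiW, Phi_XnSub1]
    have hzdeg : uP + vP ∈ degreeLT F n := Submodule.add_mem _ hu hv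
    have hcong : (X ^ n - 1 : Polynomial F) ∣
        (Ms n uP + X ^ s * Mso n (uP + vP)) - Ms n vP := by
      have hc2 := cong2 n s hn h2s (polyToVec n (uP + vP))
      rw [vecToPoly_polyToVec hzdeg] at hc2
      obtain ⟨r, hr⟩ := hc2
      have hMsz : Ms n (uP + vP) = Ms n uP + Ms n vP := Ms_add n uP vP
      have htwo : (2 : Polynomial F) = 0 := two_eq_zero_poly
      exact ⟨r, by linear_combination hr + hMsz + (Ms n uP) * htwo⟩
    rw [mem_span_pair_congr hcong]
    obtain ⟨L, hL⟩ := exists_span_pair_gen (g1 * g2) (X ^ n - 1 : Polynomial F)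
    have hLp : L ∣ (X ^ n - 1 : Polynomial F) := (hL _).mp (Ideal.subset_span (by simp))
    have hstep : Ms n vP ∈ Ideal.span ({Phi (g1 * g2), X ^ n - 1} : Set (Polynomial F)) ↔
        Phi L ∣ Ms n vP := by
      rw [show (X ^ n - 1 : Polynomial F) = Phi (X ^ n - 1) from (Phi_XnSub1 n).symm,
        show (Ms n vP) = Phi (Phi.symm (Ms n vP)) from (Phi.apply_symm_apply _).symm,
        Phi_mem_span_pair, hL, ← Phi_dvd, Phi.apply_symm_apply]
    rw [hstep, keyM n s hn h2s hsqf hLp hv, hL]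
  rw [hcond1, hcond2]

end Central

section IndexLemmas

lemma crt_eq {n : ℕ} (hodd : Odd n) {a b : ℕ} (h2 : a % 2 = b % 2)
    (hmodn : a % n = b % n) (ha : a < 2 * n) (hb : b < 2 * n) : a = b := by
  have hco : Nat.Coprime 2 n := Nat.coprime_two_left.mpr hodd
  have h : a ≡ b [MOD 2 * n] :=
    (Nat.modEq_and_modEq_iff_modEq_mul hco).mp ⟨h2, hmodn⟩
  rwa [Nat.ModEq, Nat.mod_eq_of_lt ha, Nat.mod_eq_of_lt hb] at h

lemma idx_even {n s : ℕ} (hn : 0 < n) (hodd : Odd n) (h2s : 2 * s = n + 1)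
    {i : ℕ} (hi : i < 2 * n) (hpar : i % 2 = 0) :
    2 * (s * (i % n) % n) = i := by
  refine crt_eq hodd (by omega) ?_ ?_ hi
  · have e1 : s * (i % n) % n = s * i % n := (Nat.mod_modEq i n).mul_left s
    rw [e1]
    exact mod_id1 n s h2s i
  · have := Nat.mod_lt (s * (i % n)) hn
    omega

lemma idx_odd {n s : ℕ} (hn : 0 < n) (hodd : Odd n) (h2s : 2 * s = n + 1)
    {i : ℕ} (hi : i < 2 * n) (hpar : i % 2 = 1) :
    2 * (s * ((i % n) + (n - 1)) % n) + 1 = i := by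
  refine crt_eq hodd (by omega) ?_ ?_ hi
  · have e1 : s * ((i % n) + (n - 1)) % n = s * (i + (n - 1)) % n :=
      ((Nat.mod_modEq i n).add_right (n - 1)).mul_left s
    rw [e1]
    have e2 := mod_id1 n s h2s (i + (n - 1))
    have e4 : (2 * (s * (i + (n - 1)) % n) + 1) % n = (i + (n - 1) + 1) % n :=
      Nat.ModEq.add_right 1 e2
    rw [e4, show i + (n - 1) + 1 = i + n by omega, Nat.add_mod_right]
  · have := Nat.mod_lt (s * ((i % n) + (n - 1))) hn
    omega

end IndexLemmas

lemma mem_cyclicCode {N : ℕ} {g c : Polynomial F} :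
    c ∈ cyclicCode F N g ↔
      c ∈ degreeLT F N ∧ c ∈ Ideal.span ({g, X ^ N - 1} : Set (Polynomial F)) := by
  rw [cyclicCode, Submodule.mem_inf, Submodule.restrictScalars_mem]

end VanLintAux

open VanLintAux

/-- the generalized van Lint theorem (permutation-equivalence part).
For `q` a power of `2`, `n` odd, and monic divisors `g1, g2` of `x^n - 1` over `F_q`,
the Plotkin sum `{(u | u + v) : u ∈ C1, v ∈ C2}` of the cyclic code `C1` of length `n`
generated by `g1` and the cyclic code `C2` of length `n` generated by `g1 * g2` is
permutation-equivalent to the cyclic code of length `2n` generated by `g1^2 * g2`. -/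
theorem statement0 {F : Type*} [Field F] [Fintype F]
    (hF : ∃ e : ℕ, Fintype.card F = 2 ^ e)
    (n : ℕ) (hn : 0 < n) (hodd : Odd n)
    (g1 g2 : Polynomial F) (hm1 : g1.Monic) (hm2 : g2.Monic)
    (hd1 : g1 ∣ X ^ n - 1) (hd2 : g2 ∣ X ^ n - 1) :
    ∃ σ : Equiv.Perm (Fin (2 * n)),
      (fun w : Fin (2 * n) → F => w ∘ σ) ''
        {w | ∃ u ∈ vecCode F n g1, ∃ v ∈ vecCode F n (g1 * g2),
          w = concatVec u (u + v)} =
      vecCode F (2 * n) (g1 ^ 2 * g2) := by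
  classical
  haveI hchar : CharP F 2 := by
    obtain ⟨e, he⟩ := hF
    have hp : (ringChar F).Prime := CharP.char_is_prime F (ringChar F)
    obtain ⟨k, hk, hcard⟩ := FiniteField.card F (ringChar F)
    have hdvd : ringChar F ∣ 2 ^ e := by
      rw [← he, hcard]
      exact dvd_pow_self _ (by exact_mod_cast k.ne_zero)
    have h2 : ringChar F = 2 :=
      (Nat.prime_dvd_prime_iff_eq hp Nat.prime_two).mp (Nat.Prime.dvd_of_dvd_pow hp hdvd)
    exact h2 ▸ ringChar.charP F
  obtain ⟨m0, hm0⟩ := hodd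
  have hodd' : Odd n := ⟨m0, hm0⟩
  set s : ℕ := m0 + 1 with hsdef
  have h2s : 2 * s = n + 1 := by omega
  have hsqf : Squarefree (X ^ n - 1 : Polynomial F) := by
    have hne : ((n : F)) ≠ 0 := by
      intro h
      rw [CharP.cast_eq_zero_iff F 2 n] at h
      omega
    have hsep := Polynomial.separable_X_pow_sub_C (1 : F) hne one_ne_zero
    have hsq := hsep.squarefree
    simpa using hsq
  have hXp : IsCoprime (X : Polynomial F) (X ^ n - 1) := by
    refine ⟨X ^ (n - 1), -1, ?_⟩
    have hx : (X : Polynomial F) ^ (n - 1) * X = X ^ n := by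
      rw [← pow_succ]
      congr 1
      omega
    linear_combination hx
  -- the permutation
  set σf : Fin (2 * n) → Fin (2 * n) := fun i =>
    if (i : ℕ) % 2 = 0 then ⟨(i : ℕ) % n, by have := Nat.mod_lt (i : ℕ) hn; omega⟩
    else ⟨n + (i : ℕ) % n, by have := Nat.mod_lt (i : ℕ) hn; omega⟩ with hσfdef
  have hσf_even : ∀ i : Fin (2 * n), (i : ℕ) % 2 = 0 → ((σf i : Fin (2 * n)) : ℕ) = (i : ℕ) % n := by
    intro i hi
    rw [hσfdef]
    simp only [if_pos hi]
  have hσf_odd : ∀ i : Fin (2 * n), ¬ ((i : ℕ) % 2 = 0) →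
      ((σf i : Fin (2 * n)) : ℕ) = n + (i : ℕ) % n := by
    intro i hi
    rw [hσfdef]
    simp only [if_neg hi]
  have hσinj : Function.Injective σf := by
    intro i j hij
    have hvij : ((σf i : Fin (2 * n)) : ℕ) = ((σf j : Fin (2 * n)) : ℕ) := congrArg Fin.val hij
    have hi := Nat.mod_lt (i : ℕ) hn
    have hj := Nat.mod_lt (j : ℕ) hn
    by_cases h1 : (i : ℕ) % 2 = 0 <;> by_cases h2 : (j : ℕ) % 2 = 0
    · rw [hσf_even i h1, hσf_even j h2] at hvij
      exact Fin.ext (crt_eq hodd' (by omega) hvij i.isLt j.isLt)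
    · rw [hσf_even i h1, hσf_odd j h2] at hvij
      omega
    · rw [hσf_odd i h1, hσf_even j h2] at hvij
      omega
    · rw [hσf_odd i h1, hσf_odd j h2] at hvij
      exact Fin.ext (crt_eq hodd' (by omega) (by omega) i.isLt j.isLt)
  set σ : Equiv.Perm (Fin (2 * n)) :=
    Equiv.ofBijective σf (Finite.injective_iff_bijective.mp hσinj) with hσdef
  have hσ_apply : ∀ i, σ i = σf i := fun i => rfl
  refine ⟨σ, ?_⟩
  -- decomposition of the permuted concatenation
  have hdecomp : ∀ uP vP : Polynomial F,
      vecToPoly (2 * n) ((concatVec (polyToVec n uP) (polyToVec n uP + polyToVec n vP)) ∘ σ) =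
        expand F 2 (Ms n uP) + X * expand F 2 (Mso n (uP + vP)) := by
    intro uP vP
    rw [parity_decomp]
    congr 1
    · apply congrArg
      show vecToPoly n (fun j : Fin n =>
          ((concatVec (polyToVec n uP) (polyToVec n uP + polyToVec n vP)) ∘ ⇑σ)
            ⟨2 * (j : ℕ), by have := j.isLt; omega⟩) =
        vecToPoly n (fun j : Fin n => uP.coeff (2 * (j : ℕ) % n))
      apply congrArg
      funext j
      have hjlt : 2 * (j : ℕ) < 2 * n := by have := j.isLt; omega
      have hpar : ((⟨2 * (j : ℕ), hjlt⟩ : Fin (2 * n)) : ℕ) % 2 = 0 := by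
        show (2 * (j : ℕ)) % 2 = 0
        omega
      rw [Function.comp_apply, hσ_apply]
      have hlt2 : 2 * (j : ℕ) % n < 2 * n := by
        have := Nat.mod_lt (2 * (j : ℕ)) hn
        omega
      have hval : σf ⟨2 * (j : ℕ), hjlt⟩ = ⟨2 * (j : ℕ) % n, hlt2⟩ :=
        Fin.ext (hσf_even _ hpar)
      rw [hval]
      show concatVec (polyToVec n uP) (polyToVec n uP + polyToVec n vP)
          ⟨2 * (j : ℕ) % n, hlt2⟩ = uP.coeff (2 * (j : ℕ) % n)
      unfold concatVec
      rw [dif_pos (Nat.mod_lt _ hn : 2 * (j : ℕ) % n < n)]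
      rfl
    · apply congrArg
      apply congrArg
      show vecToPoly n (fun j : Fin n =>
          ((concatVec (polyToVec n uP) (polyToVec n uP + polyToVec n vP)) ∘ ⇑σ)
            ⟨2 * (j : ℕ) + 1, by have := j.isLt; omega⟩) =
        vecToPoly n (fun j : Fin n => (uP + vP).coeff ((2 * (j : ℕ) + 1) % n))
      apply congrArg
      funext j
      have hjlt : 2 * (j : ℕ) + 1 < 2 * n := by have := j.isLt; omega
      have hpar : ¬ (((⟨2 * (j : ℕ) + 1, hjlt⟩ : Fin (2 * n)) : ℕ) % 2 = 0) := by
        show ¬ ((2 * (j : ℕ) + 1) % 2 = 0)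
        omega
      rw [Function.comp_apply, hσ_apply]
      have hmlt : n + (2 * (j : ℕ) + 1) % n < 2 * n := by
        have := Nat.mod_lt (2 * (j : ℕ) + 1) hn
        omega
      have hval : σf ⟨2 * (j : ℕ) + 1, hjlt⟩ = ⟨n + (2 * (j : ℕ) + 1) % n, hmlt⟩ :=
        Fin.ext (hσf_odd _ hpar)
      rw [hval]
      show concatVec (polyToVec n uP) (polyToVec n uP + polyToVec n vP)
          ⟨n + (2 * (j : ℕ) + 1) % n, hmlt⟩ = (uP + vP).coeff ((2 * (j : ℕ) + 1) % n)
      unfold concatVec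
      rw [dif_neg (show ¬ (n + (2 * (j : ℕ) + 1) % n < n) by omega)]
      have hidx : (⟨n + (2 * (j : ℕ) + 1) % n - n,
          by have := Nat.mod_lt (2 * (j : ℕ) + 1) hn; omega⟩ : Fin n) =
          ⟨(2 * (j : ℕ) + 1) % n, Nat.mod_lt _ hn⟩ :=
        Fin.ext (show n + (2 * (j : ℕ) + 1) % n - n = (2 * (j : ℕ) + 1) % n by omega)
      rw [hidx]
      show uP.coeff ((2 * (j : ℕ) + 1) % n) + vP.coeff ((2 * (j : ℕ) + 1) % n) = _
      rw [coeff_add]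
  -- membership characterization for length-n codes
  have hvcu : ∀ u : Fin n → F, u ∈ vecCode F n g1 ↔
      ∃ uP : Polynomial F, uP ∈ degreeLT F n ∧ g1 ∣ uP ∧ polyToVec n uP = u := by
    intro u
    constructor
    · rintro ⟨uP, huP, rfl⟩
      rw [SetLike.mem_coe, mem_cyclicCode] at huP
      exact ⟨uP, huP.1, (mem_span_pair_iff_dvd hd1).mp huP.2, rfl⟩
    · rintro ⟨uP, h1, h2, rfl⟩
      refine ⟨uP, ?_, rfl⟩
      rw [SetLike.mem_coe, mem_cyclicCode]
      exact ⟨h1, (mem_span_pair_iff_dvd hd1).mpr h2⟩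
  have hvcv : ∀ v : Fin n → F, v ∈ vecCode F n (g1 * g2) ↔
      ∃ vP : Polynomial F, vP ∈ degreeLT F n ∧
        vP ∈ Ideal.span ({g1 * g2, X ^ n - 1} : Set (Polynomial F)) ∧ polyToVec n vP = v := by
    intro v
    constructor
    · rintro ⟨vP, hvP, rfl⟩
      rw [SetLike.mem_coe, mem_cyclicCode] at hvP
      exact ⟨vP, hvP.1, hvP.2, rfl⟩
    · rintro ⟨vP, h1, h2, rfl⟩
      refine ⟨vP, ?_, rfl⟩
      rw [SetLike.mem_coe, mem_cyclicCode]
      exact ⟨h1, h2⟩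
  apply Set.eq_of_subset_of_subset
  · rintro y ⟨w, hwmem, rfl⟩
    obtain ⟨u, hu, v, hv, rfl⟩ := hwmem
    obtain ⟨uP, hudeg, hudvd, rfl⟩ := (hvcu u).mp hu
    obtain ⟨vP, hvdeg, hvspan, rfl⟩ := (hvcv v).mp hv
    refine ⟨vecToPoly (2 * n)
      ((concatVec (polyToVec n uP) (polyToVec n uP + polyToVec n vP)) ∘ σ), ?_, ?_⟩
    · rw [SetLike.mem_coe, mem_cyclicCode]
      refine ⟨vecToPoly_mem_degreeLT _ _, ?_⟩
      rw [hdecomp uP vP]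
      exact (central n s hn h2s hsqf hXp hd1 hd2 hudeg hvdeg).mpr ⟨hudvd, hvspan⟩
    · exact polyToVec_vecToPoly _ _
  · rintro y ⟨c0, hc0C, rfl⟩
    rw [SetLike.mem_coe, mem_cyclicCode] at hc0C
    obtain ⟨hc0d, hc0s⟩ := hc0C
    set uP : Polynomial F :=
      vecToPoly n (fun m : Fin n => c0.coeff (2 * (s * (m : ℕ) % n))) with huPdef
    set zP : Polynomial F :=
      vecToPoly n (fun m : Fin n => c0.coeff (2 * (s * ((m : ℕ) + (n - 1)) % n) + 1)) with hzPdef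
    set vP : Polynomial F := uP + zP with hvPdef
    have hudeg : uP ∈ degreeLT F n := vecToPoly_mem_degreeLT _ _
    have hzdeg : zP ∈ degreeLT F n := vecToPoly_mem_degreeLT _ _
    have hvdeg : vP ∈ degreeLT F n := Submodule.add_mem _ hudeg hzdeg
    have huPc : ∀ m : ℕ, (hm : m < n) → uP.coeff m = c0.coeff (2 * (s * m % n)) := by
      intro m hm
      rw [huPdef, vecToPoly_coeff, dif_pos hm]
    have hzPc : ∀ m : ℕ, (hm : m < n) →
        zP.coeff m = c0.coeff (2 * (s * (m + (n - 1)) % n) + 1) := by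
      intro m hm
      rw [hzPdef, vecToPoly_coeff, dif_pos hm]
    have hkey : (concatVec (polyToVec n uP) (polyToVec n uP + polyToVec n vP)) ∘ σ =
        polyToVec (2 * n) c0 := by
      funext i
      rw [Function.comp_apply, hσ_apply]
      have hilt := Nat.mod_lt (i : ℕ) hn
      have hlt1 : (i : ℕ) % n < 2 * n := by omega
      have hlt2 : n + (i : ℕ) % n < 2 * n := by omega
      by_cases hpar : (i : ℕ) % 2 = 0
      · have hval : σf i = ⟨(i : ℕ) % n, hlt1⟩ := Fin.ext (hσf_even i hpar)
        rw [hval]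
        show concatVec (polyToVec n uP) (polyToVec n uP + polyToVec n vP)
            ⟨(i : ℕ) % n, hlt1⟩ = c0.coeff (i : ℕ)
        unfold concatVec
        rw [dif_pos (show (i : ℕ) % n < n by omega)]
        show uP.coeff ((i : ℕ) % n) = c0.coeff (i : ℕ)
        rw [huPc _ (by omega), idx_even hn hodd' h2s i.isLt hpar]
      · have hval : σf i = ⟨n + (i : ℕ) % n, hlt2⟩ := Fin.ext (hσf_odd i hpar)
        rw [hval]
        show concatVec (polyToVec n uP) (polyToVec n uP + polyToVec n vP)
            ⟨n + (i : ℕ) % n, hlt2⟩ = c0.coeff (i : ℕ)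
        unfold concatVec
        rw [dif_neg (show ¬ (n + (i : ℕ) % n < n) by omega)]
        have hidx : (⟨n + (i : ℕ) % n - n, by omega⟩ : Fin n) = ⟨(i : ℕ) % n, by omega⟩ :=
          Fin.ext (show n + (i : ℕ) % n - n = (i : ℕ) % n by omega)
        rw [hidx]
        show uP.coeff ((i : ℕ) % n) + vP.coeff ((i : ℕ) % n) = c0.coeff (i : ℕ)
        have hvz : vP.coeff ((i : ℕ) % n) = uP.coeff ((i : ℕ) % n) + zP.coeff ((i : ℕ) % n) := by
          rw [hvPdef, coeff_add]
        rw [hvz, ← add_assoc, CharTwo.add_self_eq_zero, zero_add]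
        rw [hzPc _ (by omega), idx_odd hn hodd' h2s i.isLt (by omega)]
    have hc0eq : vecToPoly (2 * n)
        ((concatVec (polyToVec n uP) (polyToVec n uP + polyToVec n vP)) ∘ σ) = c0 := by
      rw [hkey]
      exact vecToPoly_polyToVec hc0d
    have hmem2 : expand F 2 (Ms n uP) + X * expand F 2 (Mso n (uP + vP)) ∈
        Ideal.span ({g1 ^ 2 * g2, X ^ (2 * n) - 1} : Set (Polynomial F)) := by
      rw [← hdecomp uP vP, hc0eq]
      exact hc0s
    obtain ⟨hudvd, hvspan⟩ :=
      (central n s hn h2s hsqf hXp hd1 hd2 hudeg hvdeg).mp hmem2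
    refine ⟨concatVec (polyToVec n uP) (polyToVec n uP + polyToVec n vP), ?_, ?_⟩
    · exact ⟨polyToVec n uP, (hvcu _).mpr ⟨uP, hudeg, hudvd, rfl⟩,
        polyToVec n vP, (hvcv _).mpr ⟨vP, hvdeg, hvspan, rfl⟩, rfl⟩
    · exact hkey
end

section
/- Let q be a power of 2 and let n be an odd positive integer. Let g1(x) and g2(x) be monic divisors of x^n − 1 in F_q[x]. Let C1 be the cyclic code of length n over F_q with generator polynomial g1(x), let C2 be the cyclic code of length n over F_q generated by g1(x)g2(x), and let C(g1, g2) be the cyclic code of length 2n over F_q generated by g1(x)^2 g2(x). Then C(g1, g2) has generator polynomial g1(x)^2 g2(x)/gcd(g1(x), g2(x)), dimension 2n − 2·deg g1(x) − deg g2(x) + deg gcd(g1(x), g2(x)), and, provided C2 ≠ {0}, minimum distance d(C(g1, g2)) = min{2·d(C1), d(C2)}. -/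
open Polynomial

namespace VanLintAux

variable {F : Type*} [Field F]

theorem support_mul_X_pow_card (n : ℕ) (w : Polynomial F) :
    (w * X ^ n).support.card = w.support.card := by
  have hs : (w * X ^ n).support = w.support.image (· + n) := by
    ext k
    simp only [Finset.mem_image, mem_support_iff, coeff_mul_X_pow']
    constructor
    · intro hk
      by_cases h : n ≤ k
      · exact ⟨k - n, by simpa [h] using hk, by omega⟩
      · simp [h] at hk
    · rintro ⟨j, hj, rfl⟩
      simpa using hj
  rw [hs, Finset.card_image_of_injective _ (add_left_injective n)]

theorem card_support_add_mul_X_pow {n : ℕ} {u w : Polynomial F} (hu : u.degree < n) :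
    (u + w * X ^ n).support.card = u.support.card + w.support.card := by
  have hlow : ∀ k ∈ u.support, k < n := by
    intro k hk
    have h1 : (k : WithBot ℕ) ≤ u.degree := le_degree_of_ne_zero (mem_support_iff.mp hk)
    have := lt_of_le_of_lt h1 hu
    exact_mod_cast this
  have hhigh : ∀ k ∈ (w * X ^ n).support, n ≤ k := by
    intro k hk
    rw [mem_support_iff, coeff_mul_X_pow'] at hk
    by_contra h
    simp [h] at hk
  have hdisj : Disjoint u.support (w * X ^ n).support := by
    rw [Finset.disjoint_left]
    intro k hk hk2
    exact absurd (hhigh k hk2) (not_le.mpr (hlow k hk))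
  have hsupp : (u + w * X ^ n).support = u.support ∪ (w * X ^ n).support := by
    apply Finset.Subset.antisymm support_add
    intro k hk
    rw [mem_support_iff, coeff_add]
    rcases Finset.mem_union.mp hk with h | h
    · have h2 : (w * X ^ n).coeff k = 0 := by
        rw [coeff_mul_X_pow', if_neg (not_le.mpr (hlow k h))]
      rw [h2, add_zero]
      exact mem_support_iff.mp h
    · have h2 : u.coeff k = 0 := by
        apply coeff_eq_zero_of_degree_lt
        exact lt_of_lt_of_le hu (by exact_mod_cast hhigh k h)
      rw [h2, zero_add]
      exact mem_support_iff.mp h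
  rw [hsupp, Finset.card_union_of_disjoint hdisj, support_mul_X_pow_card]

theorem card_support_sq [CharP F 2] (v : Polynomial F) :
    (v ^ 2).support.card = v.support.card := by
  haveI : Fact (Nat.Prime 2) := ⟨Nat.prime_two⟩
  have h2 : v ^ 2 = map (frobenius F 2) (expand F 2 v) := (map_frobenius_expand 2 v).symm
  have hmap : (map (frobenius F 2) (expand F 2 v)).support = (expand F 2 v).support := by
    ext k
    simp only [mem_support_iff, coeff_map, ne_eq]
    constructor
    · intro hk h0
      exact hk (by rw [h0, map_zero])
    · intro hk h0
      exact hk (frobenius_inj F 2 (by rw [h0, map_zero]))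
  have hexp : (expand F 2 v).support = v.support.image (fun i => 2 * i) := by
    ext k
    simp only [Finset.mem_image, mem_support_iff, coeff_expand (by norm_num : 0 < 2)]
    constructor
    · intro hk
      by_cases h : 2 ∣ k
      · rw [if_pos h] at hk
        exact ⟨k / 2, hk, by omega⟩
      · rw [if_neg h] at hk
        exact absurd rfl hk
    · rintro ⟨j, hj, rfl⟩
      rw [if_pos ⟨j, rfl⟩]
      simpa [Nat.mul_div_cancel_left j (by norm_num : 0 < 2)] using hj
  rw [h2, hmap, hexp, Finset.card_image_of_injective _ (fun a b hab => by omega)]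

theorem sqf_coprime [DecidableEq F] {x y : Polynomial F} (h : Squarefree (x * y)) :
    IsCoprime x y := by
  have hu : IsUnit (gcd x y) :=
    h (gcd x y) (mul_dvd_mul (gcd_dvd_left x y) (gcd_dvd_right x y))
  exact (gcd_isUnit_iff x y).mp hu

theorem finrank_inf_span (N : ℕ) (e : Polynomial F) (he0 : e ≠ 0) (hdeg : e.natDegree ≤ N) :
    Module.finrank F
      ↥(Polynomial.degreeLT F N ⊓
        Submodule.restrictScalars F (Ideal.span ({e} : Set (Polynomial F)))) =
      N - e.natDegree := by
  set k := N - e.natDegree with hk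
  let T : (Polynomial.degreeLT F k : Submodule F (Polynomial F)) →ₗ[F] Polynomial F :=
    (LinearMap.mulLeft F e).comp (Submodule.subtype _)
  have hrange : LinearMap.range T =
      Polynomial.degreeLT F N ⊓
        Submodule.restrictScalars F (Ideal.span ({e} : Set (Polynomial F))) := by
    apply le_antisymm
    · rintro _ ⟨⟨m, hm⟩, rfl⟩
      rw [Submodule.mem_inf]
      constructor
      · rw [Polynomial.mem_degreeLT]
        rcases eq_or_ne m 0 with rfl | hm0
        · simp only [T, LinearMap.comp_apply, Submodule.subtype_apply,
            LinearMap.mulLeft_apply, mul_zero, degree_zero]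
          exact WithBot.bot_lt_coe N
        · have hmlt : m.natDegree < k := by
            rw [Polynomial.mem_degreeLT] at hm
            exact_mod_cast (natDegree_lt_iff_degree_lt hm0).mpr hm
          have : (e * m).natDegree < N := by
            rw [natDegree_mul he0 hm0]; omega
          simpa only [T, LinearMap.comp_apply, Submodule.subtype_apply,
            LinearMap.mulLeft_apply] using (natDegree_lt_iff_degree_lt (mul_ne_zero he0 hm0)).mp this
      · rw [Submodule.restrictScalars_mem, Ideal.mem_span_singleton]
        exact Dvd.intro _ rfl
    · rintro c hc
      rw [Submodule.mem_inf, Polynomial.mem_degreeLT, Submodule.restrictScalars_mem,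
        Ideal.mem_span_singleton] at hc
      obtain ⟨hcdeg, hcdvd⟩ := hc
      obtain ⟨m, rfl⟩ := hcdvd
      refine ⟨⟨m, ?_⟩, rfl⟩
      rw [Polynomial.mem_degreeLT]
      rcases eq_or_ne m 0 with rfl | hm0
      · rw [degree_zero]; exact WithBot.bot_lt_coe k
      · have h1 : (e * m).natDegree < N :=
          (natDegree_lt_iff_degree_lt (mul_ne_zero he0 hm0)).mpr hcdeg
        rw [natDegree_mul he0 hm0] at h1
        exact (natDegree_lt_iff_degree_lt hm0).mp (by omega)
  have hinj : Function.Injective T := by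
    rintro ⟨a, ha⟩ ⟨b, hb⟩ hab
    have : e * a = e * b := hab
    exact Subtype.ext (mul_left_cancel₀ he0 this)
  haveI : Module.Finite F (Polynomial.degreeLT F k : Submodule F (Polynomial F)) :=
    Module.Finite.equiv (Polynomial.degreeLTEquiv F k).symm
  rw [← hrange, LinearMap.finrank_range_of_inj hinj,
    (Polynomial.degreeLTEquiv F k).finrank_eq, Module.finrank_fin_fun]

end VanLintAux

open VanLintAux

/-- the generalized van Lint theorem (parameters part).
For `q` a power of `2`, `n` odd, and monic divisors `g1, g2` of `x^n - 1` over `F_q`,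
the cyclic code `C(g1,g2)` of length `2n` generated by `g1^2 * g2` has generator
polynomial `g1^2 * g2 / gcd g1 g2` (a monic divisor of `x^{2n} - 1` generating the same
ideal), dimension `2n - 2 deg g1 - deg g2 + deg (gcd g1 g2)`, and, provided the cyclic
code `C2` generated by `g1 * g2` is nonzero, minimum distance `min (2 d(C1)) (d(C2))`. -/
theorem statement1 {F : Type*} [Field F] [Fintype F] [DecidableEq F]
    (hF : ∃ e : ℕ, Fintype.card F = 2 ^ e)
    (n : ℕ) (hn : 0 < n) (hodd : Odd n)
    (g1 g2 : Polynomial F) (hm1 : g1.Monic) (hm2 : g2.Monic)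
    (hd1 : g1 ∣ X ^ n - 1) (hd2 : g2 ∣ X ^ n - 1)
    (hC2 : cyclicCode F n (g1 * g2) ≠ ⊥) :
    (g1 ^ 2 * g2 / gcd g1 g2).Monic ∧
    (g1 ^ 2 * g2 / gcd g1 g2) ∣ X ^ (2 * n) - 1 ∧
    Ideal.span ({g1 ^ 2 * g2, X ^ (2 * n) - 1} : Set (Polynomial F)) =
      Ideal.span ({g1 ^ 2 * g2 / gcd g1 g2} : Set (Polynomial F)) ∧
    (Module.finrank F (cyclicCode F (2 * n) (g1 ^ 2 * g2)) : ℤ) =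
      2 * (n : ℤ) - 2 * g1.natDegree - g2.natDegree + (gcd g1 g2).natDegree ∧
    minDist (cyclicCode F (2 * n) (g1 ^ 2 * g2)) =
      min (2 * minDist (cyclicCode F n g1)) (minDist (cyclicCode F n (g1 * g2))) := by
  classical
  -- characteristic 2
  haveI hchar2 : CharP F 2 := by
    obtain ⟨e, he⟩ := hF
    obtain ⟨nc, hp2, hcard⟩ := FiniteField.card F (ringChar F)
    have hdvd : ringChar F ∣ 2 ^ e := by
      rw [← he, hcard]
      exact dvd_pow_self _ (by positivity)
    have h2 : ringChar F = 2 :=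
      (Nat.prime_dvd_prime_iff_eq hp2 Nat.prime_two).mp (hp2.dvd_of_dvd_pow hdvd)
    exact h2 ▸ ringChar.charP F
  haveI hcharX : CharP (Polynomial F) 2 := Polynomial.instCharP 2
  have hg10 : g1 ≠ 0 := hm1.ne_zero
  have hg20 : g2 ≠ 0 := hm2.ne_zero
  have hn2 : 2 * n ≠ 0 := by omega
  -- squarefreeness of X^n - 1
  have hnF : (n : F) ≠ 0 := by
    obtain ⟨k, hk⟩ := hodd
    have h20 : (2 : F) = 0 := by exact_mod_cast CharP.cast_eq_zero F 2
    have : ((n : ℕ) : F) = 2 * (k : F) + 1 := by rw [hk]; push_cast; ring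
    rw [this, h20]
    simp
  have hsq : Squarefree ((X : Polynomial F) ^ n - 1) := by
    have hsep := Polynomial.separable_X_pow_sub_C (1 : F) hnF one_ne_zero
    rw [map_one] at hsep
    exact hsep.squarefree
  have hhm : ((X : Polynomial F) ^ n - 1).Monic := by
    have := Polynomial.monic_X_pow_sub_C (1 : F) (by omega : n ≠ 0)
    rwa [map_one] at this
  have hh0 : ((X : Polynomial F) ^ n - 1) ≠ 0 := hhm.ne_zero
  have hHm' : ((X : Polynomial F) ^ (2 * n) - 1).Monic := by
    have := Polynomial.monic_X_pow_sub_C (1 : F) hn2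
    rwa [map_one] at this
  have hhdeg : ((X : Polynomial F) ^ n - 1).natDegree = n := by
    have := Polynomial.natDegree_X_pow_sub_C (n := n) (r := (1 : F))
    rwa [map_one] at this
  have hHdeg : ((X : Polynomial F) ^ (2 * n) - 1).natDegree = 2 * n := by
    have := Polynomial.natDegree_X_pow_sub_C (n := 2 * n) (r := (1 : F))
    rwa [map_one] at this
  -- gcd and lcm
  set d := gcd g1 g2 with hdd
  set l := lcm g1 g2 with hld
  have hd0 : d ≠ 0 := by
    rw [hdd, Ne, gcd_eq_zero_iff]
    rintro ⟨h1, -⟩; exact hg10 h1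
  have hl0 : l ≠ 0 := by
    rw [hld, Ne, lcm_eq_zero_iff]
    rintro (h1 | h2); exacts [hg10 h1, hg20 h2]
  have hdm : d.Monic := by
    have := Polynomial.monic_normalize hd0
    rwa [hdd, normalize_gcd] at this
  have hlm : l.Monic := by
    have := Polynomial.monic_normalize hl0
    rwa [hld, normalize_lcm] at this
  have hdl : d * l = g1 * g2 :=
    Polynomial.eq_of_monic_of_associated (hdm.mul hlm) (hm1.mul hm2) (gcd_mul_lcm g1 g2)
  have hgd1 : d ∣ g1 := gcd_dvd_left g1 g2
  have hgd2 : d ∣ g2 := gcd_dvd_right g1 g2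
  have hg1l : g1 ∣ l := dvd_lcm_left g1 g2
  have hg2l : g2 ∣ l := dvd_lcm_right g1 g2
  have hlh : l ∣ (X : Polynomial F) ^ n - 1 := lcm_dvd hd1 hd2
  obtain ⟨s, hs⟩ := hlh
  obtain ⟨b, hb⟩ := hgd2
  have hlb : l = g1 * b := by
    apply mul_left_cancel₀ hd0
    rw [hdl, hb]; ring
  set e := g1 * l with hed
  have hem : e.Monic := hm1.mul hlm
  have he0 : e ≠ 0 := hem.ne_zero
  have hde : d * e = g1 ^ 2 * g2 := by
    rw [hed]
    calc d * (g1 * l) = g1 * (d * l) := by ring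
    _ = g1 * (g1 * g2) := by rw [hdl]
    _ = g1 ^ 2 * g2 := by ring
  have hdiveq : g1 ^ 2 * g2 / d = e := by
    have h1 : d * (g1 ^ 2 * g2 / d) = g1 ^ 2 * g2 :=
      EuclideanDomain.mul_div_cancel' hd0 ⟨e, hde.symm⟩
    exact mul_left_cancel₀ hd0 (h1.trans hde.symm)
  -- coprimality facts
  have hg2sq : Squarefree g2 := hsq.squarefree_of_dvd hd2
  have hcls : IsCoprime l s := sqf_coprime (hs ▸ hsq)
  have hcds : IsCoprime d s := hcls.of_isCoprime_of_dvd_left (hgd1.trans hg1l)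
  have hcdb : IsCoprime d b := sqf_coprime (hb ▸ hg2sq)
  set m := b * (s * s) with hmd
  have hcdm : IsCoprime d m := hcdb.mul_right (hcds.mul_right hcds)
  -- X^(2n) - 1 = (X^n-1)^2 in characteristic 2
  have hH : (X : Polynomial F) ^ (2 * n) - 1 = ((X : Polynomial F) ^ n - 1) * (X ^ n - 1) := by
    simp only [CharTwo.sub_eq_add]
    have h20 : (2 : Polynomial F) = 0 := by exact_mod_cast CharP.cast_eq_zero (Polynomial F) 2
    calc (X : Polynomial F) ^ (2 * n) + 1
        = X ^ (2 * n) + 2 * X ^ n + 1 := by rw [h20]; ring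
      _ = (X ^ n + 1) * (X ^ n + 1) := by ring
  have hHm : e * m = (X : Polynomial F) ^ (2 * n) - 1 := by
    rw [hH, hs, hed, hlb, hmd]; ring
  have heH : e ∣ (X : Polynomial F) ^ (2 * n) - 1 := ⟨m, hHm.symm⟩
  -- span equalities
  have hspan : Ideal.span ({g1 ^ 2 * g2, X ^ (2 * n) - 1} : Set (Polynomial F)) =
      Ideal.span ({e} : Set (Polynomial F)) := by
    apply le_antisymm
    · rw [Ideal.span_le, Set.insert_subset_iff, Set.singleton_subset_iff]
      constructor
      · rw [SetLike.mem_coe, Ideal.mem_span_singleton]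
        exact ⟨d, by rw [← hde]; ring⟩
      · rw [SetLike.mem_coe, Ideal.mem_span_singleton]
        exact ⟨m, hHm.symm⟩
    · rw [Ideal.span_le, Set.singleton_subset_iff, SetLike.mem_coe, Ideal.mem_span_pair]
      obtain ⟨A, B, hab⟩ := hcdm
      exact ⟨A, B, by linear_combination e * hab - A * hde - B * hHm⟩
  have hspan2 : Ideal.span ({g1 * g2, X ^ n - 1} : Set (Polynomial F)) =
      Ideal.span ({l} : Set (Polynomial F)) := by
    apply le_antisymm
    · rw [Ideal.span_le, Set.insert_subset_iff, Set.singleton_subset_iff]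
      constructor
      · rw [SetLike.mem_coe, Ideal.mem_span_singleton]
        exact ⟨d, by rw [← hdl]; ring⟩
      · rw [SetLike.mem_coe, Ideal.mem_span_singleton]
        exact ⟨s, hs⟩
    · rw [Ideal.span_le, Set.singleton_subset_iff, SetLike.mem_coe, Ideal.mem_span_pair]
      obtain ⟨A, B, hab⟩ := hcds
      exact ⟨A, B, by linear_combination l * hab - A * hdl + B * hs⟩
  have hspan1 : Ideal.span ({g1, X ^ n - 1} : Set (Polynomial F)) =
      Ideal.span ({g1} : Set (Polynomial F)) := by
    apply le_antisymm
    · rw [Ideal.span_le, Set.insert_subset_iff, Set.singleton_subset_iff]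
      constructor
      · exact Ideal.mem_span_singleton_self g1
      · rw [SetLike.mem_coe, Ideal.mem_span_singleton]
        exact hd1
    · rw [Ideal.span_le, Set.singleton_subset_iff]
      exact Ideal.subset_span (Set.mem_insert _ _)
  -- membership characterizations
  have hmemC : ∀ c : Polynomial F, c ∈ cyclicCode F (2 * n) (g1 ^ 2 * g2) ↔
      c.degree < ((2 * n : ℕ) : WithBot ℕ) ∧ e ∣ c := by
    intro c
    simp only [cyclicCode, Submodule.mem_inf, Submodule.restrictScalars_mem,
      Polynomial.mem_degreeLT]
    rw [hspan, Ideal.mem_span_singleton]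
  have hmemC1 : ∀ c : Polynomial F, c ∈ cyclicCode F n g1 ↔
      c.degree < (n : WithBot ℕ) ∧ g1 ∣ c := by
    intro c
    simp only [cyclicCode, Submodule.mem_inf, Submodule.restrictScalars_mem,
      Polynomial.mem_degreeLT]
    rw [hspan1, Ideal.mem_span_singleton]
  have hmemC2 : ∀ c : Polynomial F, c ∈ cyclicCode F n (g1 * g2) ↔
      c.degree < (n : WithBot ℕ) ∧ l ∣ c := by
    intro c
    simp only [cyclicCode, Submodule.mem_inf, Submodule.restrictScalars_mem,
      Polynomial.mem_degreeLT]
    rw [hspan2, Ideal.mem_span_singleton]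
  refine ⟨by rw [hdiveq]; exact hem, by rw [hdiveq]; exact heH, by rw [hdiveq]; exact hspan, ?_, ?_⟩
  · -- dimension
    have hcodeEq : cyclicCode F (2 * n) (g1 ^ 2 * g2) =
        Polynomial.degreeLT F (2 * n) ⊓
          Submodule.restrictScalars F (Ideal.span ({e} : Set (Polynomial F))) := by
      unfold cyclicCode
      rw [hspan]
    have hedeg2n : e.natDegree ≤ 2 * n := by
      have := Polynomial.natDegree_le_of_dvd heH hHm'.ne_zero
      rwa [hHdeg] at this
    have hdegs : d.natDegree + e.natDegree = 2 * g1.natDegree + g2.natDegree := by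
      have h1 : (d * e).natDegree = d.natDegree + e.natDegree := natDegree_mul hd0 he0
      rw [hde, natDegree_mul (pow_ne_zero 2 hg10) hg20, natDegree_pow] at h1
      omega
    rw [hcodeEq, VanLintAux.finrank_inf_span (2 * n) e he0 hedeg2n]
    rw [Nat.cast_sub hedeg2n]
    push_cast
    omega
  · -- minimum distance
    -- nonzero codewords in C2 and C1
    obtain ⟨c2, hc2mem, hc2ne⟩ := (Submodule.ne_bot_iff _).mp hC2
    have hc2C1 : c2 ∈ cyclicCode F n g1 := by
      rw [hmemC1]
      obtain ⟨hdeg, hdvd⟩ := (hmemC2 c2).mp hc2mem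
      exact ⟨hdeg, hg1l.trans hdvd⟩
    have hS1ne : Set.Nonempty {w | ∃ c ∈ cyclicCode F n g1, c ≠ 0 ∧ c.support.card = w} :=
      ⟨_, c2, hc2C1, hc2ne, rfl⟩
    have hS2ne : Set.Nonempty {w | ∃ c ∈ cyclicCode F n (g1 * g2), c ≠ 0 ∧ c.support.card = w} :=
      ⟨_, c2, hc2mem, hc2ne, rfl⟩
    obtain ⟨u₁, hu₁mem, hu₁ne, hu₁card⟩ :
        ∃ c ∈ cyclicCode F n g1, c ≠ 0 ∧ c.support.card = minDist (cyclicCode F n g1) :=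
      Nat.sInf_mem hS1ne
    obtain ⟨v₂, hv₂mem, hv₂ne, hv₂card⟩ :
        ∃ c ∈ cyclicCode F n (g1 * g2), c ≠ 0 ∧
          c.support.card = minDist (cyclicCode F n (g1 * g2)) :=
      Nat.sInf_mem hS2ne
    set d1 := minDist (cyclicCode F n g1) with hd1def
    set d2 := minDist (cyclicCode F n (g1 * g2)) with hd2def
    obtain ⟨hu₁deg, hu₁dvd⟩ := (hmemC1 u₁).mp hu₁mem
    obtain ⟨hv₂deg, hv₂dvd⟩ := (hmemC2 v₂).mp hv₂mem
    have hu₁ndeg : u₁.natDegree < n := (natDegree_lt_iff_degree_lt hu₁ne).mpr hu₁deg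
    have hv₂ndeg : v₂.natDegree < n := (natDegree_lt_iff_degree_lt hv₂ne).mpr hv₂deg
    -- first upper-bound codeword
    have hcw1mem : u₁ * (X ^ n - 1) ∈ cyclicCode F (2 * n) (g1 ^ 2 * g2) := by
      rw [hmemC]
      constructor
      · have hne : u₁ * ((X : Polynomial F) ^ n - 1) ≠ 0 := mul_ne_zero hu₁ne hh0
        rw [← natDegree_lt_iff_degree_lt hne, natDegree_mul hu₁ne hh0, hhdeg]
        omega
      · rw [hed]
        exact mul_dvd_mul hu₁dvd (lcm_dvd hd1 hd2)
    have hcw1card : (u₁ * ((X : Polynomial F) ^ n - 1)).support.card = 2 * d1 := by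
      have heq : u₁ * ((X : Polynomial F) ^ n - 1) = u₁ + u₁ * X ^ n := by
        simp only [CharTwo.sub_eq_add]; ring
      rw [heq, card_support_add_mul_X_pow hu₁deg, hu₁card]
      omega
    have hub1 : sInf {w | ∃ c ∈ cyclicCode F (2 * n) (g1 ^ 2 * g2), c ≠ 0 ∧ c.support.card = w}
        ≤ 2 * d1 :=
      Nat.sInf_le ⟨u₁ * (X ^ n - 1), hcw1mem, mul_ne_zero hu₁ne hh0, hcw1card⟩
    -- second upper-bound codeword
    have hcw2mem : v₂ ^ 2 ∈ cyclicCode F (2 * n) (g1 ^ 2 * g2) := by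
      rw [hmemC]
      constructor
      · have hne : (v₂ : Polynomial F) ^ 2 ≠ 0 := pow_ne_zero 2 hv₂ne
        rw [← natDegree_lt_iff_degree_lt hne, natDegree_pow]
        omega
      · have h1 : e ∣ l * l := by
          rw [hed]
          exact mul_dvd_mul hg1l dvd_rfl
        have h2 : l * l ∣ v₂ ^ 2 := by
          rw [sq]
          exact mul_dvd_mul hv₂dvd hv₂dvd
        exact h1.trans h2
    have hcw2card : ((v₂ : Polynomial F) ^ 2).support.card = d2 := by
      rw [card_support_sq, hv₂card]
    have hub2 : sInf {w | ∃ c ∈ cyclicCode F (2 * n) (g1 ^ 2 * g2), c ≠ 0 ∧ c.support.card = w}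
        ≤ d2 :=
      Nat.sInf_le ⟨v₂ ^ 2, hcw2mem, pow_ne_zero 2 hv₂ne, hcw2card⟩
    -- lower bound
    have hlb : ∀ w ∈ {w | ∃ c ∈ cyclicCode F (2 * n) (g1 ^ 2 * g2), c ≠ 0 ∧ c.support.card = w},
        min (2 * d1) d2 ≤ w := by
      rintro w ⟨c, hcmem, hcne, rfl⟩
      obtain ⟨hcdeg, hcdvd⟩ := (hmemC c).mp hcmem
      set u := c %ₘ (X ^ n : Polynomial F) with hud
      set w' := c /ₘ (X ^ n : Polynomial F) with hwd
      have hXm : ((X : Polynomial F) ^ n).Monic := monic_X_pow n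
      have hcuw : c = u + w' * X ^ n := by
        have := Polynomial.modByMonic_add_div c (X ^ n : Polynomial F)
        rw [hud, hwd]
        linear_combination -this
      have hudeg : u.degree < (n : WithBot ℕ) := by
        have := Polynomial.degree_modByMonic_lt c hXm
        rwa [degree_X_pow] at this
      have hwdeg : w'.degree < (n : WithBot ℕ) := by
        rcases eq_or_ne w' 0 with h0 | h0
        · rw [h0, degree_zero]; exact WithBot.bot_lt_coe n
        · have hXn0 : ((X : Polynomial F) ^ n) ≠ 0 := hXm.ne_zero
          have h6 : w' * X ^ n = c - u := by rw [hcuw]; ring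
          have h7 : (w' * (X : Polynomial F) ^ n).degree < ((2 * n : ℕ) : WithBot ℕ) := by
            rw [h6]
            apply lt_of_le_of_lt (degree_sub_le _ _)
            apply max_lt hcdeg
            apply lt_of_lt_of_le hudeg
            exact_mod_cast Nat.cast_le.mpr (by omega : n ≤ 2 * n)
          have h8 : w'.natDegree + n < 2 * n := by
            have := (natDegree_lt_iff_degree_lt (mul_ne_zero h0 hXn0)).mpr h7
            rwa [natDegree_mul h0 hXn0, natDegree_X_pow] at this
          rw [← natDegree_lt_iff_degree_lt h0]
          omega
      have hcardc : c.support.card = u.support.card + w'.support.card := by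
        have := card_support_add_mul_X_pow (w := w') hudeg
        rw [← hcuw] at this
        exact this
      rcases eq_or_ne (u + w') 0 with ha | ha
      · -- c = u * (X^n - 1)
        have hw'u : w' = u := by
          have h9 : w' = -u := eq_neg_of_add_eq_zero_right ha
          rw [h9, CharTwo.neg_eq]
        have hceq : c = u * (X ^ n - 1) := by
          rw [hcuw, hw'u]
          simp only [CharTwo.sub_eq_add]
          ring
        have hu0 : u ≠ 0 := by
          intro h0
          apply hcne
          rw [hceq, h0, zero_mul]
        have hg1u : g1 ∣ u := by
          have hgg : g1 * g1 ∣ c := by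
            refine dvd_trans ?_ hcdvd
            rw [hed]
            exact mul_dvd_mul_left g1 hg1l
          obtain ⟨h₁, hh1⟩ := hd1
          have hcop : IsCoprime g1 h₁ := sqf_coprime (hh1 ▸ hsq)
          rw [hceq, hh1] at hgg
          have h10 : u * (g1 * h₁) = g1 * (u * h₁) := by ring
          rw [h10] at hgg
          have h11 : g1 ∣ u * h₁ := (mul_dvd_mul_iff_left hg10).mp hgg
          exact hcop.dvd_of_dvd_mul_right h11
        have humem : u ∈ cyclicCode F n g1 := (hmemC1 u).mpr ⟨hudeg, hg1u⟩
        have hd1le : d1 ≤ u.support.card := Nat.sInf_le ⟨u, humem, hu0, rfl⟩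
        rw [hcardc, hw'u]
        exact le_trans (min_le_left _ _) (by omega)
      · -- u + w' is a nonzero codeword of C2
        have haeq : u + w' = c - w' * (X ^ n - 1) := by
          rw [hcuw]; ring
        have hg1c : g1 ∣ c := by
          refine dvd_trans ?_ hcdvd
          rw [hed]; exact dvd_mul_right g1 l
        have hg2c : g2 ∣ c := by
          refine dvd_trans ?_ hcdvd
          rw [hed]; exact hg2l.trans (dvd_mul_left l g1)
        have hg1a : g1 ∣ u + w' := by
          rw [haeq]
          exact dvd_sub hg1c (hd1.mul_left w')
        have hg2a : g2 ∣ u + w' := by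
          rw [haeq]
          exact dvd_sub hg2c (hd2.mul_left w')
        have hla : l ∣ u + w' := lcm_dvd hg1a hg2a
        have hadeg : (u + w').degree < (n : WithBot ℕ) :=
          lt_of_le_of_lt (degree_add_le u w') (max_lt hudeg hwdeg)
        have hamem : u + w' ∈ cyclicCode F n (g1 * g2) := (hmemC2 _).mpr ⟨hadeg, hla⟩
        have hd2le : d2 ≤ (u + w').support.card := Nat.sInf_le ⟨u + w', hamem, ha, rfl⟩
        have hacard : (u + w').support.card ≤ u.support.card + w'.support.card :=
          le_trans (Finset.card_le_card support_add) (Finset.card_union_le _ _)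
        rw [hcardc]
        exact le_trans (min_le_right _ _) (by omega)
    -- conclude
    have hSne : Set.Nonempty
        {w | ∃ c ∈ cyclicCode F (2 * n) (g1 ^ 2 * g2), c ≠ 0 ∧ c.support.card = w} :=
      ⟨2 * d1, u₁ * (X ^ n - 1), hcw1mem, mul_ne_zero hu₁ne hh0, hcw1card⟩
    show sInf {w | ∃ c ∈ cyclicCode F (2 * n) (g1 ^ 2 * g2), c ≠ 0 ∧ c.support.card = w}
        = min (2 * d1) d2
    exact le_antisymm (le_min hub1 hub2) (le_csInf hSne hlb)
end

section
/- Let q be a prime power and let C be an [n, k, d]_q linear code with d even. Then ∑_{i=0}^{(d−2)/2} C(n−1, i)·(q−1)^i ≤ q^{n−1−k}, where C(n−1, i) denotes the binomial coefficient. -/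
/-- The minimum distance (= minimum Hamming weight of a nonzero codeword) of a linear
code `C ⊆ F^n`. -/
noncomputable def linMinDist {F : Type*} [Field F] {n : ℕ} (C : Submodule F (Fin n → F)) : ℕ :=
  letI := Classical.decEq F
  sInf {w | ∃ c ∈ C, c ≠ 0 ∧ hammingNorm c = w}

private lemma fiber_card {F : Type*} [Field F] [Fintype F] [DecidableEq F]
    {m : ℕ} (s : Finset (Fin m)) :
    (Finset.univ.filter fun e : Fin m → F =>
        (Finset.univ.filter fun i => e i ≠ 0) = s).card
      = (Fintype.card F - 1) ^ s.card := by
  have hset : (Finset.univ.filter fun e : Fin m → F =>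
        (Finset.univ.filter fun i => e i ≠ 0) = s)
      = Fintype.piFinset (fun i => if i ∈ s then Finset.univ.filter (· ≠ (0:F)) else {0}) := by
    ext e
    simp only [Finset.mem_filter, Finset.mem_univ, true_and, Fintype.mem_piFinset]
    rw [Finset.ext_iff]
    constructor
    · intro h i
      have hi := h i
      simp only [Finset.mem_filter, Finset.mem_univ, true_and] at hi
      by_cases hmem : i ∈ s
      · simp only [hmem, if_true, Finset.mem_filter, Finset.mem_univ, true_and]
        exact hi.mpr hmem
      · simp only [hmem, if_false, Finset.mem_singleton]
        by_contra hne
        exact hmem (hi.mp hne)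
    · intro h i
      have hi := h i
      simp only [Finset.mem_filter, Finset.mem_univ, true_and]
      by_cases hmem : i ∈ s
      · simp only [hmem, if_true, Finset.mem_filter, Finset.mem_univ, true_and] at hi
        exact ⟨fun _ => hmem, fun _ => hi⟩
      · simp only [hmem, if_false, Finset.mem_singleton] at hi
        exact ⟨fun hne => absurd hi hne, fun hmem' => absurd hmem' hmem⟩
  rw [hset, Fintype.card_piFinset]
  have hcards : ∀ i : Fin m,
      (if i ∈ s then Finset.univ.filter (· ≠ (0:F)) else ({0} : Finset F)).card
      = if i ∈ s then Fintype.card F - 1 else 1 := by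
    intro i
    by_cases hmem : i ∈ s
    · simp only [hmem, if_true]
      rw [Finset.filter_ne' Finset.univ 0, Finset.card_erase_of_mem (Finset.mem_univ 0),
        Finset.card_univ]
    · simp [hmem]
  rw [Finset.prod_congr rfl fun i _ => hcards i, Fintype.prod_ite_mem,
    Finset.prod_const]

private lemma ball_card {F : Type*} [Field F] [Fintype F] [DecidableEq F]
    (m t : ℕ) :
    (Finset.univ.filter fun e : Fin m → F => hammingNorm e ≤ t).card
      = ∑ i ∈ Finset.range (t + 1), m.choose i * (Fintype.card F - 1) ^ i := by
  rw [Finset.card_eq_sum_card_fiberwise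
    (f := fun e : Fin m → F => Finset.univ.filter fun i => e i ≠ 0)
    (t := (Finset.range (t+1)).biUnion fun i => (Finset.univ : Finset (Fin m)).powersetCard i)
    (by
      intro e he
      rw [Finset.mem_coe, Finset.mem_filter] at he
      rw [Finset.mem_coe, Finset.mem_biUnion]
      exact ⟨hammingNorm e, Finset.mem_range.mpr (Nat.lt_succ_of_le he.2),
        Finset.mem_powersetCard.mpr ⟨Finset.subset_univ _, rfl⟩⟩)]
  rw [Finset.sum_biUnion (by
    intro a _ b _ hab
    exact Finset.disjoint_left.mpr fun x hxa hxb => hab (by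
      rw [Finset.mem_powersetCard] at hxa hxb
      rw [← hxa.2, hxb.2]))]
  refine Finset.sum_congr rfl fun i hi => ?_
  rw [Finset.mem_range, Nat.lt_succ_iff] at hi
  have hfib : ∀ s ∈ (Finset.univ : Finset (Fin m)).powersetCard i,
      ((Finset.univ.filter fun e : Fin m → F => hammingNorm e ≤ t).filter
        (fun e => (Finset.univ.filter fun j => e j ≠ 0) = s)).card
      = (Fintype.card F - 1) ^ i := by
    intro s hs
    rw [Finset.mem_powersetCard] at hs
    have hfil : (Finset.univ.filter fun e : Fin m → F => hammingNorm e ≤ t).filter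
        (fun e => (Finset.univ.filter fun j => e j ≠ 0) = s)
        = Finset.univ.filter fun e : Fin m → F =>
            (Finset.univ.filter fun j => e j ≠ 0) = s := by
      rw [Finset.filter_filter]
      refine Finset.filter_congr fun e _ => ?_
      constructor
      · exact fun h => h.2
      · intro h
        refine ⟨?_, h⟩
        have hne : hammingNorm e = s.card := by
          rw [hammingNorm]
          exact congrArg Finset.card h
        rw [hne, hs.2]
        exact hi
    rw [hfil, fiber_card s, hs.2]
  rw [Finset.sum_congr rfl hfib, Finset.sum_const, Finset.card_powersetCard,
    Finset.card_univ, Fintype.card_fin, smul_eq_mul]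

/-- the bound of Fu et al.  If `C` is an `[n, k, d]_q` linear code with `d`
even, then `∑_{i=0}^{(d-2)/2} C(n-1, i) (q-1)^i ≤ q^{n-1-k}`. -/
theorem statement2 {F : Type*} [Field F] [Fintype F]
    (q : ℕ) (hq : Fintype.card F = q) (hqpp : IsPrimePow q)
    (n k d : ℕ) (C : Submodule F (Fin n → F)) (hC : C ≠ ⊥)
    (hk : Module.finrank F C = k)
    (hd : linMinDist C = d) (hdeven : Even d) :
    ∑ i ∈ Finset.range ((d - 2) / 2 + 1), (n - 1).choose i * (q - 1) ^ i ≤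
      q ^ (n - 1 - k) := by
  letI := Classical.decEq F
  subst hq
  unfold linMinDist at hd
  have hSne : {w | ∃ c ∈ C, c ≠ 0 ∧ hammingNorm c = w}.Nonempty := by
    obtain ⟨c, hcC, hc0⟩ := Submodule.exists_mem_ne_zero_of_ne_bot hC
    exact ⟨hammingNorm c, c, hcC, hc0, rfl⟩
  have hlow : ∀ c ∈ C, c ≠ 0 → d ≤ hammingNorm c := fun c hc h0 =>
    hd ▸ Nat.sInf_le ⟨c, hc, h0, rfl⟩
  obtain ⟨c₀, hc₀C, hc₀0, hc₀d⟩ : ∃ c ∈ C, c ≠ 0 ∧ hammingNorm c = d :=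
    hd ▸ Nat.sInf_mem hSne
  have hd0 : d ≠ 0 := by
    rw [← hc₀d]
    exact hammingNorm_eq_zero.not.mpr hc₀0
  obtain ⟨r, hr⟩ := hdeven
  have hd2 : 2 ≤ d := by omega
  have hdn : d ≤ n := by
    rw [← hc₀d]
    simpa using (hammingNorm_le_card_fintype (x := c₀))
  obtain ⟨m, rfl⟩ : ∃ m, n = m + 1 := ⟨n - 1, by omega⟩
  set t := (d - 2) / 2 with ht
  have hdt : d = 2 * t + 2 := by omega
  -- punctured norms
  have hπnorm : ∀ c : Fin (m+1) → F,
      hammingNorm c ≤ hammingNorm (fun i : Fin m => c i.castSucc) + 1 := by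
    intro c
    have h1 : hammingNorm c = ∑ i : Fin (m+1), if c i ≠ 0 then 1 else 0 := by
      rw [hammingNorm, Finset.card_filter]
    have h2 : hammingNorm (fun i : Fin m => c i.castSucc)
        = ∑ i : Fin m, if c i.castSucc ≠ 0 then 1 else 0 := by
      rw [hammingNorm, Finset.card_filter]
    rw [h1, h2, Fin.sum_univ_castSucc]
    have hle : (if c (Fin.last m) ≠ 0 then 1 else 0) ≤ 1 := by split <;> simp
    exact Nat.add_le_add_left hle _
  set B : Finset (Fin m → F) :=
    Finset.univ.filter (fun e : Fin m → F => hammingNorm e ≤ t) with hB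
  haveI : Fintype C := Fintype.ofFinite C
  have hinj : Function.Injective
      (fun p : C × B => (fun i : Fin m =>
        (p.1 : Fin (m+1) → F) i.castSucc + (p.2 : Fin m → F) i)) := by
    rintro ⟨⟨c₁, hc₁⟩, ⟨e₁, he₁⟩⟩ ⟨⟨c₂, hc₂⟩, ⟨e₂, he₂⟩⟩ h
    dsimp only at h
    rw [hB, Finset.mem_filter] at he₁ he₂
    have hcc : c₁ = c₂ := by
      by_contra hne
      have hsub : c₁ - c₂ ∈ C := C.sub_mem hc₁ hc₂
      have hsub0 : c₁ - c₂ ≠ 0 := sub_ne_zero.mpr hne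
      have hdle : d ≤ hammingNorm (c₁ - c₂) := hlow _ hsub hsub0
      have hkey : (fun i : Fin m => (c₁ - c₂) i.castSucc) = e₂ - e₁ := by
        funext i
        have hfi := congrFun h i
        simp only [Pi.sub_apply]
        linear_combination hfi
      have h2t : hammingNorm (fun i : Fin m => (c₁ - c₂) i.castSucc) ≤ 2 * t := by
        rw [hkey, sub_eq_neg_add, ← hammingDist_eq_hammingNorm, hammingDist_comm]
        calc hammingDist e₂ e₁ ≤ hammingDist e₂ 0 + hammingDist 0 e₁ :=
              hammingDist_triangle _ _ _
          _ = hammingNorm e₂ + hammingNorm e₁ := by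
              rw [hammingDist_zero_right, hammingDist_comm, hammingDist_zero_right]
          _ ≤ 2 * t := by omega
      have := hπnorm (c₁ - c₂)
      omega
    subst hcc
    have hee : e₁ = e₂ := by
      funext i
      exact add_left_cancel (congrFun h i)
    subst hee
    rfl
  have hcard := Fintype.card_le_of_injective _ hinj
  rw [Fintype.card_prod, Fintype.card_coe] at hcard
  have hCcard : Fintype.card C = Fintype.card F ^ k := by
    rw [Module.card_eq_pow_finrank (K := F) (V := C), hk]
  have hFun : Fintype.card (Fin m → F) = Fintype.card F ^ m := by
    rw [Fintype.card_fun, Fintype.card_fin]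
  rw [hCcard, hFun, hB, ball_card] at hcard
  have hq2 : 2 ≤ Fintype.card F := hqpp.two_le
  have hV1 : 1 ≤ ∑ i ∈ Finset.range (t + 1), m.choose i * (Fintype.card F - 1) ^ i := by
    calc 1 = m.choose 0 * (Fintype.card F - 1) ^ 0 := by simp
      _ ≤ _ := Finset.single_le_sum (f := fun i => m.choose i * (Fintype.card F - 1) ^ i)
          (fun _ _ => Nat.zero_le _) (Finset.mem_range.mpr (Nat.succ_pos t))
  have hkm : k ≤ m := by
    have hle : Fintype.card F ^ k ≤ Fintype.card F ^ m :=
      le_trans (Nat.le_mul_of_pos_right _ hV1) hcard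
    exact (Nat.pow_le_pow_iff_right (by omega)).mp hle
  have hmul : Fintype.card F ^ k * (∑ i ∈ Finset.range (t + 1),
      m.choose i * (Fintype.card F - 1) ^ i)
      ≤ Fintype.card F ^ k * Fintype.card F ^ (m - k) := by
    rw [← pow_add, Nat.add_sub_cancel' hkm]
    exact hcard
  have hfin : (∑ i ∈ Finset.range (t + 1), m.choose i * (Fintype.card F - 1) ^ i)
      ≤ Fintype.card F ^ (m - k) :=
    Nat.le_of_mul_le_mul_left hmul (Nat.pow_pos (n := k) (by omega))
  simpa using hfin
end

section
/- Let m ≥ 4 be an integer, n = 2^m − 1, and let β be a primitive element of F_{2^m}. Then the cyclic code of length 2n over F_2 with generator polynomial (x−1)^2 m_β(x) has dimension 2(2^m − 1) − m − 2 and minimum distance exactly 4; moreover, this code is distance-optimal. -/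
open Polynomial

/-- The minimum Hamming distance of an arbitrary (not necessarily linear) code
`D ⊆ F^N`. -/
noncomputable def setMinDist {F : Type*} {N : ℕ} (D : Set (Fin N → F)) : ℕ :=
  letI := Classical.decEq F
  sInf {w | ∃ u ∈ D, ∃ v ∈ D, u ≠ v ∧ hammingDist u v = w}

section Generic
variable {F : Type*} [Field F] {N : ℕ} {g : Polynomial F}

lemma mem_cyclicCode (hgN : g ∣ X ^ N - 1) {c : Polynomial F} :
    c ∈ cyclicCode F N g ↔ c.degree < (N : WithBot ℕ) ∧ g ∣ c := by
  have hspan : Ideal.span ({g, X ^ N - 1} : Set (Polynomial F)) = Ideal.span {g} := by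
    apply le_antisymm
    · rw [Ideal.span_le]
      rintro x hx
      rcases hx with rfl | rfl
      · exact Ideal.subset_span rfl
      · exact Ideal.mem_span_singleton.mpr hgN
    · exact Ideal.span_mono (by simp)
  simp [cyclicCode, Submodule.mem_inf, mem_degreeLT, hspan, Ideal.mem_span_singleton]

lemma cyclicCode_equiv (hg0 : g ≠ 0) (hgN : g ∣ X ^ N - 1) (hkN : g.natDegree ≤ N) :
    Nonempty ((degreeLT F (N - g.natDegree)) ≃ₗ[F] cyclicCode F N g) := by
  set k := g.natDegree with hk
  have hmem : ∀ a : degreeLT F (N - k), g * (a : Polynomial F) ∈ cyclicCode F N g := by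
    rintro ⟨a, ha⟩
    rw [mem_cyclicCode hgN]
    refine ⟨?_, Dvd.intro _ rfl⟩
    rcases eq_or_ne a 0 with rfl | ha0
    · simp only [mul_zero, degree_zero]; exact WithBot.bot_lt_coe N
    · rw [mem_degreeLT] at ha
      have hda : a.natDegree < N - k := (natDegree_lt_iff_degree_lt ha0).mpr ha
      have h1 : k + a.natDegree < N := by omega
      rw [degree_mul, degree_eq_natDegree hg0, degree_eq_natDegree ha0]
      exact_mod_cast h1
  let f : (degreeLT F (N - k)) →ₗ[F] cyclicCode F N g :=
    LinearMap.codRestrict _ ((LinearMap.mulLeft F g).comp (degreeLT F (N - k)).subtype) hmem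
  refine ⟨LinearEquiv.ofBijective f ⟨?_, ?_⟩⟩
  · intro a b hab
    have h2 : g * (a : Polynomial F) = g * (b : Polynomial F) := congrArg Subtype.val hab
    exact Subtype.ext (mul_left_cancel₀ hg0 h2)
  · rintro ⟨c, hc⟩
    rw [mem_cyclicCode hgN] at hc
    obtain ⟨hcd, q, rfl⟩ := hc
    have hq : q ∈ degreeLT F (N - k) := by
      rw [mem_degreeLT]
      rcases eq_or_ne q 0 with rfl | hq0
      · simp only [degree_zero]; exact WithBot.bot_lt_coe (N - k)
      · have hc0 : g * q ≠ 0 := mul_ne_zero hg0 hq0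
        rw [← natDegree_lt_iff_degree_lt hq0]
        have h3 := (natDegree_lt_iff_degree_lt hc0).mpr hcd
        rw [natDegree_mul hg0 hq0] at h3
        omega
    exact ⟨⟨q, hq⟩, Subtype.ext rfl⟩

end Generic

section Packing

def chi {N : ℕ} (s : Finset (Fin N)) : Fin N → ZMod 2 := fun i => if i ∈ s then 1 else 0

variable {N : ℕ}

lemma chi_dist (u : Fin N → ZMod 2) (s : Finset (Fin N)) :
    hammingDist u (u + chi s) ≤ s.card := by
  unfold hammingDist
  apply Finset.card_le_card
  intro i hi
  simp only [Finset.mem_filter, Pi.add_apply, chi] at hi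
  by_contra hmem
  simp [hmem] at hi

lemma chi_inj : Function.Injective (chi (N := N)) := by
  intro s t h
  ext i
  have hi := congrFun h i
  by_cases h1 : i ∈ s <;> by_cases h2 : i ∈ t <;> simp_all [chi]

lemma dist_le_four {u v : Fin N → ZMod 2} {s t : Finset (Fin N)}
    (hp : u + chi s = v + chi t) (hs : s.card ≤ 2) (ht : t.card ≤ 2) :
    hammingDist u v ≤ 4 := by
  calc hammingDist u v ≤ hammingDist u (u + chi s) + hammingDist (u + chi s) v :=
        hammingDist_triangle _ _ _
    _ = hammingDist u (u + chi s) + hammingDist (v + chi t) v := by rw [hp]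
    _ = hammingDist u (u + chi s) + hammingDist v (v + chi t) := by
        rw [hammingDist_comm (v + chi t)]
    _ ≤ s.card + t.card := add_le_add (chi_dist _ _) (chi_dist _ _)
    _ ≤ 4 := by omega

lemma packing (D : Set (Fin N → ZMod 2))
    (h : ∀ u ∈ D, ∀ v ∈ D, u ≠ v → 5 ≤ hammingDist u v) :
    Nat.card D * (1 + N + N * (N - 1) / 2) ≤ 2 ^ N := by
  classical
  have hΦ : Function.Injective (fun p : D × {s : Finset (Fin N) // s.card ≤ 2} =>
      (p.1 : Fin N → ZMod 2) + chi p.2.1) := by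
    rintro ⟨u, s⟩ ⟨v, t⟩ hp
    simp only at hp
    have huv : (u : Fin N → ZMod 2) = v := by
      by_contra hne
      have h5 := h u u.2 v v.2 hne
      have h4 := dist_le_four hp s.2 t.2
      omega
    rw [huv] at hp
    have hst := chi_inj (add_left_cancel hp)
    exact Prod.ext (Subtype.ext huv) (Subtype.ext hst)
  have hle := Nat.card_le_card_of_injective _ hΦ
  rw [Nat.card_prod] at hle
  have hcS : Nat.card {s : Finset (Fin N) // s.card ≤ 2} = 1 + N + N * (N - 1) / 2 := by
    rw [Nat.card_eq_fintype_card, Fintype.card_subtype]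
    have heq : (Finset.univ.filter fun s : Finset (Fin N) => s.card ≤ 2)
        = (Finset.range 3).biUnion (fun k => Finset.powersetCard k Finset.univ) := by
      ext s
      simp [Finset.mem_powersetCard_univ, Nat.lt_succ_iff]
    rw [heq, Finset.card_biUnion]
    · simp only [Finset.card_powersetCard, Finset.sum_range_succ, Finset.sum_range_zero,
        Finset.card_univ, Fintype.card_fin]
      rw [Nat.choose_two_right]
      simp
    · intro a _ b _ hab
      simp only [Finset.disjoint_left, Finset.mem_powersetCard_univ]
      rintro s rfl h2
      exact hab h2
  have hcT : Nat.card (Fin N → ZMod 2) = 2 ^ N := by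
    rw [Nat.card_eq_fintype_card, Fintype.card_fun]
    simp
  rw [hcS, hcT] at hle
  exact hle

lemma hammingDist_instEq (inst : ∀ _ : Fin N, DecidableEq (ZMod 2)) (u v : Fin N → ZMod 2) :
    @hammingDist _ _ _ inst u v = hammingDist u v := by
  have h : inst = fun _ => (inferInstance : DecidableEq (ZMod 2)) := Subsingleton.elim _ _
  rw [h]

lemma opt_aux (inst : ∀ _ : Fin N, DecidableEq (ZMod 2))
    (D : Set (Fin N → ZMod 2)) (M : ℕ) (hcard : Nat.card D = 2 ^ M)
    (harith : 2 ^ N < 2 ^ M * (1 + N + N * (N - 1) / 2)) :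
    sInf {w | ∃ u ∈ D, ∃ v ∈ D, u ≠ v ∧ @hammingDist _ _ _ inst u v = w} ≤ 4 := by
  simp only [hammingDist_instEq inst]
  by_contra hlt
  push_neg at hlt
  have h5 : ∀ u ∈ D, ∀ v ∈ D, u ≠ v → 5 ≤ hammingDist u v := by
    intro u hu v hv huv
    have hmem : hammingDist u v ∈ {w | ∃ u ∈ D, ∃ v ∈ D, u ≠ v ∧ hammingDist u v = w} :=
      ⟨u, hu, v, hv, huv, rfl⟩
    have := Nat.sInf_le hmem
    omega
  have hpack := packing D h5
  rw [hcard] at hpack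
  omega

end Packing

lemma minpoly_natDeg {K : Type*} [Field K] [Fintype K] [Algebra (ZMod 2) K]
    (m : ℕ) (hm : 1 ≤ m) (hK : Fintype.card K = 2 ^ m)
    (β : K) (hβ : IsPrimitiveRoot β (2 ^ m - 1)) :
    (minpoly (ZMod 2) β).natDegree = m := by
  have hfin : Module.Finite (ZMod 2) K := Module.Finite.of_finite
  have hint : IsIntegral (ZMod 2) β := IsIntegral.of_finite _ _
  have hfr : Module.finrank (ZMod 2) K = m := by
    have h1 : Fintype.card K = Fintype.card (ZMod 2) ^ Module.finrank (ZMod 2) K :=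
      Module.card_eq_pow_finrank
    rw [ZMod.card, hK] at h1
    exact (Nat.pow_right_injective le_rfl h1.symm)
  have hpos : 0 < 2 ^ m - 1 := by
    have : 2 ≤ 2 ^ m := Nat.one_lt_two_pow (by omega)
    omega
  have hu : IsUnit β := hβ.isUnit hpos.ne'
  have horder : orderOf hu.unit = 2 ^ m - 1 := by
    rw [← orderOf_units, hu.unit_spec, ← hβ.eq_orderOf]
  have htop : Subgroup.zpowers hu.unit = ⊤ := by
    apply Subgroup.eq_top_of_card_eq
    rw [Nat.card_zpowers, horder, Nat.card_units, Nat.card_eq_fintype_card, hK]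
  have hgen : ∀ x : K, x ≠ 0 → ∃ k : ℕ, β ^ k = x := by
    intro x hx
    have hmem : Units.mk0 x hx ∈ Subgroup.zpowers hu.unit := htop ▸ Subgroup.mem_top _
    obtain ⟨k, hk⟩ := mem_powers_iff_mem_zpowers.mpr hmem
    refine ⟨k, ?_⟩
    have := congrArg Units.val hk
    simpa [hu.unit_spec] using this
  have hadj : IntermediateField.adjoin (ZMod 2) {β} = (⊤ : IntermediateField (ZMod 2) K) := by
    rw [eq_top_iff]
    intro x _
    by_cases hx : x = 0
    · rw [hx]; exact zero_mem _
    · obtain ⟨k, rfl⟩ := hgen x hx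
      exact pow_mem (IntermediateField.mem_adjoin_simple_self _ β) k
  have := IntermediateField.adjoin.finrank hint
  rw [hadj, IntermediateField.finrank_top', hfr] at this
  exact this.symm

lemma two_eq_zero_poly : (2 : (ZMod 2)[X]) = 0 := by
  have := CharP.cast_eq_zero ((ZMod 2)[X]) 2
  exact_mod_cast this

lemma sq_char2 (n : ℕ) : ((X : (ZMod 2)[X]) ^ n - 1) ^ 2 = X ^ (2 * n) - 1 := by
  rw [sub_sq, two_eq_zero_poly]
  ring_nf
  rw [CharTwo.neg_eq]

lemma c0_eq (n : ℕ) : ((X : (ZMod 2)[X]) ^ n - 1) * (X - 1) = X ^ (n + 1) + X ^ n + X + 1 := by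
  rw [CharTwo.sub_eq_add, CharTwo.sub_eq_add]
  ring

lemma zmod2_ne_zero {x : ZMod 2} (h : x ≠ 0) : x = 1 := by
  revert h; revert x; decide

lemma eval_one_support {c : (ZMod 2)[X]} : eval 1 c = (c.support.card : ZMod 2) := by
  rw [eval_eq_sum, Polynomial.sum]
  simp only [one_pow, mul_one]
  rw [Finset.sum_congr rfl (fun i hi => zmod2_ne_zero (mem_support_iff.mp hi))]
  simp [Finset.sum_const]

lemma even_weight {c : (ZMod 2)[X]} (h : (X - 1) ∣ c) : 2 ∣ c.support.card := by
  obtain ⟨q, rfl⟩ := h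
  have h1 : eval 1 ((X - 1) * q : (ZMod 2)[X]) = 0 := by simp
  rw [eval_one_support] at h1
  exact (ZMod.natCast_eq_zero_iff _ 2).mp h1

lemma weight_two_aux {n i : ℕ} (hodd : ¬ 2 ∣ n)
    (h : ((X : (ZMod 2)[X]) - 1) ^ 2 ∣ X ^ i * (X ^ n - 1)) : False := by
  obtain ⟨q, hq⟩ := h
  have h2 := congrArg (fun f => eval 1 (derivative f)) hq
  simp [derivative_mul, derivative_pow, derivative_X_pow] at h2
  exact hodd ((ZMod.natCast_eq_zero_iff n 2).mp h2)

lemma support_c0 {n : ℕ} (hn : 2 ≤ n) :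
    (((X : (ZMod 2)[X]) ^ (n+1) + X ^ n + X + 1)).support = {0, 1, n, n+1} := by
  ext k
  simp only [mem_support_iff, coeff_add, coeff_X_pow, coeff_X, coeff_one,
    Finset.mem_insert, Finset.mem_singleton]
  by_cases hk0 : k = 0 <;> by_cases hk1 : k = 1 <;> by_cases hkn : k = n <;>
    by_cases hkn1 : k = n + 1 <;> simp_all <;> first | omega | (rw [if_neg (by omega)]; decide)


/-- for `m ≥ 4`, `n = 2^m - 1` and `β` a primitive element of `F_{2^m}`,
the repeated-root binary cyclic code of length `2n` with generator polynomial
`(x-1)^2 m_β(x)` has dimension `2(2^m - 1) - m - 2` and minimum distance exactly `4`,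
and it is distance-optimal: no binary code of the same length and cardinality has a
larger minimum distance. -/
theorem statement3 {K : Type*} [Field K] [Fintype K] [Algebra (ZMod 2) K]
    (m : ℕ) (hm : 4 ≤ m) (hK : Fintype.card K = 2 ^ m)
    (n : ℕ) (hn : n = 2 ^ m - 1)
    (β : K) (hβ : IsPrimitiveRoot β (2 ^ m - 1)) :
    Module.finrank (ZMod 2)
        (cyclicCode (ZMod 2) (2 * n) ((X - 1) ^ 2 * minpoly (ZMod 2) β)) =
      2 * (2 ^ m - 1) - m - 2 ∧
    minDist (cyclicCode (ZMod 2) (2 * n) ((X - 1) ^ 2 * minpoly (ZMod 2) β)) = 4 ∧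
    ∀ D : Set (Fin (2 * n) → ZMod 2),
      Nat.card D = Nat.card (cyclicCode (ZMod 2) (2 * n) ((X - 1) ^ 2 * minpoly (ZMod 2) β)) →
        setMinDist D ≤ 4 := by
  classical
  set p := minpoly (ZMod 2) β with hp
  have h2m : 16 ≤ 2 ^ m := by
    calc (16:ℕ) = 2 ^ 4 := by norm_num
    _ ≤ 2 ^ m := Nat.pow_le_pow_right (by norm_num) hm
  have hq : 2 ^ m = n + 1 := by
    rw [hn, Nat.sub_add_cancel]
    exact Nat.one_le_two_pow
  have hmlt : m < 2 ^ m := Nat.lt_two_pow_self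
  have hn15 : 15 ≤ n := by
    have h16 : 16 ≤ n + 1 := hq ▸ h2m
    omega
  have hmn : m < n + 1 := hq ▸ hmlt
  have hodd : ¬ (2:ℕ) ∣ n := by
    have h2dvd : (2:ℕ) ∣ 2 ^ m := dvd_pow_self 2 (by omega)
    rw [hq] at h2dvd
    omega
  have hfin : Module.Finite (ZMod 2) K := Module.Finite.of_finite
  have hint : IsIntegral (ZMod 2) β := IsIntegral.of_finite _ _
  haveI hCharK : CharP K 2 := charP_of_injective_algebraMap (algebraMap (ZMod 2) K).injective 2
  have hdegp : p.natDegree = m := minpoly_natDeg m (by omega) hK β hβ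
  have hp0 : p ≠ 0 := minpoly.ne_zero hint
  have hirr : Irreducible p := minpoly.irreducible hint
  have hβn : β ^ n = 1 := by rw [hn]; exact hβ.pow_eq_one
  have hβ0 : β ≠ 0 := by
    intro h
    rw [h, zero_pow (show n ≠ 0 by omega)] at hβn
    exact zero_ne_one hβn
  have hpdvd : p ∣ X ^ n - 1 := minpoly.dvd _ _ (by simp [hβn])
  have hX1ne : (X - 1 : (ZMod 2)[X]) ≠ 0 := by
    intro h
    have h2 := congrArg (eval 0) h
    simp at h2
  have hX1deg : (X - 1 : (ZMod 2)[X]).natDegree = 1 := by rw [← C_1 (R := ZMod 2)]; exact natDegree_X_sub_C 1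
  have hX1dvd : (X - 1 : (ZMod 2)[X]) ∣ X ^ n - 1 := by
    rw [← C_1 (R := ZMod 2), dvd_iff_isRoot]
    simp [IsRoot]
  have hpnd : ¬ p ∣ (X - 1 : (ZMod 2)[X]) := by
    intro h
    have := natDegree_le_of_dvd h hX1ne
    omega
  have hcop : IsCoprime ((X : (ZMod 2)[X]) - 1) p := ((hirr.coprime_iff_not_dvd).mpr hpnd).symm
  have hXp : ((X : (ZMod 2)[X]) - 1) * p ∣ X ^ n - 1 := hcop.mul_dvd hX1dvd hpdvd
  set g := ((X : (ZMod 2)[X]) - 1) ^ 2 * p with hgdef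
  have hg0 : g ≠ 0 := mul_ne_zero (pow_ne_zero _ hX1ne) hp0
  have hgdeg : g.natDegree = m + 2 := by
    rw [hgdef, natDegree_mul (pow_ne_zero _ hX1ne) hp0, natDegree_pow, hX1deg, hdegp]
    ring
  have hgdvd : g ∣ X ^ (2 * n) - 1 := by
    have h1 : (((X : (ZMod 2)[X]) - 1) * p) ^ 2 ∣ (X ^ n - 1) ^ 2 := pow_dvd_pow_of_dvd hXp 2
    have h2 : g ∣ (((X : (ZMod 2)[X]) - 1) * p) ^ 2 := by
      rw [mul_pow, hgdef]
      exact mul_dvd_mul_left _ (dvd_pow_self p two_ne_zero)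
    rw [← sq_char2]
    exact h2.trans h1
  have hkN : g.natDegree ≤ 2 * n := by omega
  obtain ⟨e⟩ := cyclicCode_equiv hg0 hgdvd hkN
  have hdim : Module.finrank (ZMod 2) (cyclicCode (ZMod 2) (2 * n) g) = 2 * n - (m + 2) := by
    rw [← e.finrank_eq, (degreeLTEquiv (ZMod 2) _).finrank_eq, Module.finrank_fin_fun, hgdeg]
  have hcard : Nat.card (cyclicCode (ZMod 2) (2 * n) g) = 2 ^ (2 * n - (m + 2)) := by
    rw [Nat.card_congr (e.symm.trans (degreeLTEquiv (ZMod 2) _)).toEquiv,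
      Nat.card_eq_fintype_card, Fintype.card_fun, ZMod.card, Fintype.card_fin, hgdeg]
  -- weight-4 codeword
  have hc0dvd : g ∣ (X ^ (n+1) + X ^ n + X + 1 : (ZMod 2)[X]) := by
    rw [← c0_eq]
    have hgg : g = (((X : (ZMod 2)[X]) - 1) * p) * (X - 1) := by rw [hgdef]; ring
    rw [hgg]
    exact mul_dvd_mul_right hXp _
  have hc0mem : (X ^ (n+1) + X ^ n + X + 1 : (ZMod 2)[X]) ∈ cyclicCode (ZMod 2) (2*n) g := by
    rw [mem_cyclicCode hgdvd]
    refine ⟨?_, hc0dvd⟩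
    rw [← c0_eq, degree_mul]
    have hd1 : ((X : (ZMod 2)[X]) ^ n - 1).degree = n := by
      rw [← C_1 (R := ZMod 2)]
      exact degree_X_pow_sub_C (by omega) 1
    have hd2 : ((X : (ZMod 2)[X]) - 1).degree = 1 := by
      rw [← C_1 (R := ZMod 2)]
      exact degree_X_sub_C 1
    rw [hd1, hd2]
    have : ((n : WithBot ℕ) + 1) = ((n + 1 : ℕ) : WithBot ℕ) := by push_cast; ring
    rw [this]
    exact_mod_cast (show n + 1 < 2 * n by omega)
  have hc0supp := support_c0 (n := n) (by omega)
  have hc0card : (X ^ (n+1) + X ^ n + X + 1 : (ZMod 2)[X]).support.card = 4 := by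
    rw [hc0supp]
    rw [Finset.card_insert_of_notMem (by simp <;> omega),
        Finset.card_insert_of_notMem (by simp <;> omega),
        Finset.card_insert_of_notMem (by simp <;> omega),
        Finset.card_singleton]
  have hc0ne : (X ^ (n+1) + X ^ n + X + 1 : (ZMod 2)[X]) ≠ 0 := by
    intro h
    rw [h] at hc0card
    simp at hc0card
  have h4mem : 4 ∈ {w | ∃ c ∈ cyclicCode (ZMod 2) (2*n) g, c ≠ 0 ∧ c.support.card = w} :=
    ⟨_, hc0mem, hc0ne, hc0card⟩
  have hlow : ∀ w ∈ {w | ∃ c ∈ cyclicCode (ZMod 2) (2*n) g, c ≠ 0 ∧ c.support.card = w},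
      4 ≤ w := by
    rintro w ⟨c, hcmem, hc0, rfl⟩
    rw [mem_cyclicCode hgdvd] at hcmem
    obtain ⟨hcdeg, hcdvd⟩ := hcmem
    have hX1c : (X - 1 : (ZMod 2)[X]) ∣ c := by
      refine dvd_trans ?_ hcdvd
      exact ⟨(X - 1) * p, by rw [hgdef]; ring⟩
    have heven := even_weight hX1c
    have hne0 : c.support.card ≠ 0 := by
      simp [Finset.card_eq_zero, support_eq_empty, hc0]
    have hne2 : c.support.card ≠ 2 := by
      intro h2
      obtain ⟨i0, j0, hij0, hs0⟩ := Finset.card_eq_two.mp h2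
      have key : ∀ i j : ℕ, i < j → c.support = {i, j} → False := by
        intro i j hlt hs
        have hci : c.coeff i ≠ 0 := mem_support_iff.mp (by rw [hs]; simp)
        have hcj : c.coeff j ≠ 0 := mem_support_iff.mp (by rw [hs]; simp)
        have hc : c = X ^ i + X ^ j := by
          have h1 : c = monomial i (c.coeff i) + monomial j (c.coeff j) := by
            conv_lhs => rw [as_sum_support c]
            rw [hs, Finset.sum_pair (by omega)]
          rw [h1, zmod2_ne_zero hci, zmod2_ne_zero hcj, X_pow_eq_monomial, X_pow_eq_monomial]
        have haeval : β ^ i + β ^ j = 0 := by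
          obtain ⟨r, hr⟩ := dvd_trans (show p ∣ g from ⟨(X-1)^2, by rw [hgdef]; ring⟩) hcdvd
          have hz : aeval β p = 0 := minpoly.aeval _ _
          calc β ^ i + β ^ j = aeval β c := by rw [hc]; simp
            _ = aeval β p * aeval β r := by rw [hr, map_mul]
            _ = 0 := by rw [hz, zero_mul]
        have hji : β ^ j = β ^ i := by
          have h3 : β ^ j = -β ^ i := by linear_combination haeval
          rw [h3, CharTwo.neg_eq]
        have hpow : β ^ (j - i) = 1 := by
          have h4 : β ^ (j - i) * β ^ i = β ^ j := by
            rw [← pow_add]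
            congr 1
            omega
          refine mul_right_cancel₀ (pow_ne_zero i hβ0) ?_
          rw [h4, hji, one_mul]
        have hdvdn : n ∣ (j - i) := by
          have h5 := (hβ.pow_eq_one_iff_dvd _).mp hpow
          rwa [← hn] at h5
        have hjin : j - i = n := by
          have hjle : j ≤ c.natDegree := le_natDegree_of_mem_supp j (by rw [hs]; simp)
          have hclt : c.natDegree < 2 * n := (natDegree_lt_iff_degree_lt hc0).mpr hcdeg
          obtain ⟨s, hs'⟩ := hdvdn
          rcases s with _ | _ | s
          · omega
          · omega
          · exfalso
            have h6 : n * 2 ≤ n * (s + 1 + 1) := Nat.mul_le_mul_left _ (by omega)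
            omega
        have hXX : c = X ^ i * (X ^ n - 1) := by
          have hj' : j = i + n := by omega
          rw [hc, hj', CharTwo.sub_eq_add, mul_add, mul_one, ← pow_add, add_comm]
        have h2dvdc : ((X:(ZMod 2)[X]) - 1) ^ 2 ∣ X ^ i * (X ^ n - 1) := by
          rw [← hXX]
          exact dvd_trans (Dvd.intro p rfl) hcdvd
        exact weight_two_aux hodd h2dvdc
      rcases Nat.lt_or_ge i0 j0 with hlt | hge
      · exact key i0 j0 hlt hs0
      · exact key j0 i0 (by omega) (by rw [hs0, Finset.pair_comm])
    omega
  refine ⟨?_, ?_, ?_⟩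
  · rw [hdim, ← hn]
    omega
  · exact le_antisymm (Nat.sInf_le h4mem) (le_csInf ⟨4, h4mem⟩ hlow)
  · intro D hD
    rw [hcard] at hD
    have hA : (2*n) * ((2*n) - 1) / 2 = n * (2*n - 1) := by
      rw [mul_assoc, Nat.mul_div_cancel_left _ (by norm_num)]
    have harith : 2 ^ (2*n) < 2 ^ (2*n - (m+2)) * (1 + 2*n + (2*n) * ((2*n) - 1) / 2) := by
      rw [hA]
      have hsplit : (2:ℕ) ^ (2*n) = 2 ^ (2*n - (m+2)) * 2 ^ (m+2) := by
        rw [← pow_add]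
        congr 1
        omega
      rw [hsplit]
      have h42 : (2:ℕ) ^ (m+2) = (n+1) * 4 := by
        rw [pow_add, hq]
        norm_num
      have h29 : n * 29 ≤ n * (2*n - 1) := Nat.mul_le_mul_left _ (by omega)
      have hlt2 : (2:ℕ) ^ (m+2) < 1 + 2*n + n*(2*n-1) := by
        rw [h42]
        nlinarith
      exact mul_lt_mul_of_pos_left hlt2 (pow_pos (by norm_num) _)
    exact opt_aux _ D _ hD harith
end

section
/- Let q ≥ 4 be a power of 2, let m ≥ 2 be an integer, n = q^m − 1, and let β be a primitive element of F_{q^m}. Then the cyclic code of length n over F_q with generator polynomial (x−1)·m_β(x) has dimension n − m − 1 and minimum distance exactly 3; in particular, it contains a codeword of the form 1 + b1·x^i + b2·x^{q^m−2} of Hamming weight 3 with b1, b2 ∈ F_q \ {0}. -/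
open Polynomial

-- helper: code as range
lemma code_eq_range {F : Type*} [Field F] (N : ℕ) (g : Polynomial F) (hg : g ≠ 0)
    (hgN : g.natDegree ≤ N) :
    (Polynomial.degreeLT F N ⊓
        Submodule.restrictScalars F (Ideal.span ({g} : Set (Polynomial F))) : Submodule F (Polynomial F))
      = LinearMap.range ((LinearMap.mulLeft F g).comp
          (Submodule.subtype (Polynomial.degreeLT F (N - g.natDegree)))) := by
  ext c
  simp only [Submodule.mem_inf, Polynomial.mem_degreeLT, Submodule.restrictScalars_mem,
    Ideal.mem_span_singleton, LinearMap.mem_range, LinearMap.coe_comp, Function.comp_apply,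
    Submodule.coe_subtype, LinearMap.mulLeft_apply]
  constructor
  · rintro ⟨hdeg, k, rfl⟩
    rcases eq_or_ne k 0 with rfl | hk
    · exact ⟨⟨0, (degreeLT F _).zero_mem⟩, by simp⟩
    · have hdk : k.natDegree < N - g.natDegree := by
        have h1 : (g * k).natDegree < N := by
          rwa [natDegree_lt_iff_degree_lt (mul_ne_zero hg hk)]
        rw [natDegree_mul hg hk] at h1
        omega
      exact ⟨⟨k, Polynomial.mem_degreeLT.2 ((natDegree_lt_iff_degree_lt hk).1 hdk)⟩, rfl⟩
  · rintro ⟨⟨k, hk⟩, rfl⟩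
    refine ⟨?_, k, rfl⟩
    show (g * k).degree < (N : WithBot ℕ)
    rcases eq_or_ne k 0 with rfl | hk0
    · rw [mul_zero, Polynomial.degree_zero]; exact_mod_cast WithBot.bot_lt_coe (N:ℕ)
    · rw [Polynomial.mem_degreeLT] at hk
      have : k.natDegree < N - g.natDegree := (natDegree_lt_iff_degree_lt hk0).2 hk
      rw [← natDegree_lt_iff_degree_lt (mul_ne_zero hg hk0), natDegree_mul hg hk0]
      omega

lemma code_finrank {F : Type*} [Field F] (N : ℕ) (g : Polynomial F) (hg : g ≠ 0)
    (hgN : g.natDegree ≤ N) :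
    Module.finrank F (Polynomial.degreeLT F N ⊓
        Submodule.restrictScalars F (Ideal.span ({g} : Set (Polynomial F)))
          : Submodule F (Polynomial F)) = N - g.natDegree := by
  rw [code_eq_range N g hg hgN]
  have hinj : Function.Injective ((LinearMap.mulLeft F g).comp
      (Submodule.subtype (Polynomial.degreeLT F (N - g.natDegree)))) := by
    intro x y h
    exact Subtype.ext (mul_left_cancel₀ hg h)
  rw [LinearMap.finrank_range_of_inj hinj]
  rw [(Polynomial.degreeLTEquiv F (N - g.natDegree)).finrank_eq]
  simp [Module.finrank_pi]


/-- for `q ≥ 4` a power of `2`, `m ≥ 2`, `n = q^m - 1` and `β` a primitive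
element of `F_{q^m}`, the cyclic code of length `n` over `F_q` with generator polynomial
`(x-1) m_β(x)` has dimension `n - m - 1` and minimum distance exactly `3`; in particular
it contains a codeword `1 + b1 x^i + b2 x^{q^m - 2}` of Hamming weight `3` with
`b1, b2 ∈ F_q \ {0}`. -/
theorem statement5 {F K : Type*} [Field F] [Fintype F] [Field K] [Fintype K] [Algebra F K]
    (q : ℕ) (hq : Fintype.card F = q) (hq2 : ∃ e : ℕ, q = 2 ^ e) (hq4 : 4 ≤ q)
    (m : ℕ) (hm : 2 ≤ m) (hK : Fintype.card K = q ^ m)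
    (n : ℕ) (hn : n = q ^ m - 1)
    (β : K) (hβ : IsPrimitiveRoot β (q ^ m - 1)) :
    Module.finrank F (cyclicCode F n ((X - 1) * minpoly F β)) = n - m - 1 ∧
    minDist (cyclicCode F n ((X - 1) * minpoly F β)) = 3 ∧
    ∃ (i : ℕ) (b1 b2 : F), b1 ≠ 0 ∧ b2 ≠ 0 ∧
      (1 + C b1 * X ^ i + C b2 * X ^ (q ^ m - 2)) ∈ cyclicCode F n ((X - 1) * minpoly F β) ∧
      (1 + C b1 * X ^ i + C b2 * X ^ (q ^ m - 2) : Polynomial F).support.card = 3 := by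
  classical
  have hq1 : 1 < q := by omega
  have h16 : 16 ≤ q ^ m := le_trans (by calc (16:ℕ) = 4^2 := by norm_num
    _ ≤ 4 ^ m := Nat.pow_le_pow_right (by norm_num) hm) (Nat.pow_le_pow_left hq4 m)
  have hmn : m + 2 ≤ n := by
    have h1 : 2*m < 2^(2*m) := Nat.lt_two_pow_self
    have h2 : (2:ℕ)^(2*m) = 4^m := by rw [pow_mul]; norm_num
    have h3 : (4:ℕ)^m ≤ q^m := Nat.pow_le_pow_left hq4 m
    omega
  have hβn : β ^ (q^m - 1) = 1 := hβ.pow_eq_one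
  have hβ0 : β ≠ 0 := by
    rintro rfl
    rw [zero_pow (by omega)] at hβn
    exact zero_ne_one hβn
  have hβ1 : β ≠ 1 := by
    intro h
    exact hβ.pow_ne_one_of_pos_of_lt one_ne_zero (by omega) (by simp [h])
  have hint : IsIntegral F β := IsIntegral.of_finite F β
  have hfr : Module.finrank F K = m := by
    have h := Module.card_eq_pow_finrank (K := F) (V := K)
    rw [hK, hq] at h
    exact (Nat.pow_right_injective (by omega) h).symm
  have hsurj : ∀ x : K, x ≠ 0 → ∃ i, i < q^m - 1 ∧ β ^ i = x := by
    classical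
    intro x hx
    have hcardne : Fintype.card {y : K | y ≠ 0} = q^m - 1 := by
      rw [Set.card_ne_eq, hK]
    let f : Fin (q^m - 1) → {y : K | y ≠ 0} := fun i => ⟨β ^ i.val, pow_ne_zero _ hβ0⟩
    have hfinj : Function.Injective f := fun i j h =>
      Fin.ext (hβ.pow_inj i.2 j.2 (Subtype.ext_iff.1 h))
    have hfbij : Function.Bijective f :=
      (Fintype.bijective_iff_injective_and_card f).2 ⟨hfinj, by simp [hcardne, hK]⟩
    obtain ⟨i, hi⟩ := hfbij.2 ⟨x, hx⟩
    exact ⟨i.val, i.2, Subtype.ext_iff.1 hi⟩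
  have hadj : IntermediateField.adjoin F {β} = ⊤ := by
    rw [eq_top_iff]
    intro x _
    rcases eq_or_ne x 0 with rfl|hx
    · exact zero_mem _
    · obtain ⟨i, _, rfl⟩ := hsurj x hx
      exact pow_mem (IntermediateField.mem_adjoin_simple_self F β) i
  have hdegp : (minpoly F β).natDegree = m := by
    have h := IntermediateField.adjoin.finrank hint
    rw [hadj, IntermediateField.finrank_top', hfr] at h
    exact h.symm
  set p := minpoly F β with hp
  set g := (X - 1 : F[X]) * p with hgdef
  have hp0 : p ≠ 0 := minpoly.ne_zero hint
  have hX1C : (X - 1 : F[X]) = X - C 1 := by rw [map_one]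
  have hX10 : (X - 1 : F[X]) ≠ 0 := by rw [hX1C]; exact X_sub_C_ne_zero 1
  have hg0 : g ≠ 0 := mul_ne_zero hX10 hp0
  have hgdeg : g.natDegree = m + 1 := by
    rw [hgdef, natDegree_mul hX10 hp0, hX1C, natDegree_X_sub_C, hdegp]; omega
  have hcop : IsCoprime (X - 1 : F[X]) p := by
    rw [hX1C, (irreducible_X_sub_C (1:F)).coprime_iff_not_dvd]
    intro hdvd
    obtain ⟨k, hk⟩ := hdvd
    have hk0 : k ≠ 0 := by rintro rfl; rw [mul_zero] at hk; exact hp0 hk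
    rcases (minpoly.irreducible hint).isUnit_or_isUnit hk with h|h
    · exact Polynomial.not_isUnit_X_sub_C 1 h
    · have hkd := natDegree_eq_zero_of_isUnit h
      have := congrArg natDegree hk
      rw [hdegp, natDegree_mul (X_sub_C_ne_zero 1) hk0, natDegree_X_sub_C, hkd] at this
      omega
  have hdvd1 : (X - 1 : F[X]) ∣ X^n - 1 := by
    rw [hX1C, dvd_iff_isRoot]
    simp [IsRoot]
  have hdvd2 : p ∣ X^n - 1 := minpoly.dvd F β (by simp [hn, hβn])
  have hdvdg : g ∣ X^n - 1 := hcop.mul_dvd hdvd1 hdvd2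
  have hspan : Ideal.span ({g, X^n - 1} : Set F[X]) = Ideal.span {g} := by
    apply le_antisymm
    · rw [Ideal.span_le]
      rintro y hy
      rcases hy with rfl | hy
      · exact Ideal.subset_span rfl
      · rw [Set.mem_singleton_iff] at hy
        subst hy
        rw [SetLike.mem_coe, Ideal.mem_span_singleton]
        exact hdvdg
    · exact Ideal.span_mono (by simp)
  have hgc : ∀ c : F[X], g ∣ c ↔ (c.eval 1 = 0 ∧ (aeval β) c = 0) := by
    intro c
    constructor
    · intro h
      constructor
      · have h1 : (X - 1 : F[X]) ∣ c := dvd_trans (Dvd.intro _ rfl) h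
        rw [hX1C, dvd_iff_isRoot] at h1
        exact h1
      · exact minpoly.dvd_iff.1 (dvd_trans (Dvd.intro_left _ rfl) h)
    · rintro ⟨h1, h2⟩
      exact hcop.mul_dvd (by rw [hX1C, dvd_iff_isRoot]; exact h1) (minpoly.dvd F β h2)
  have hmem : ∀ c : F[X], c ∈ cyclicCode F n g ↔
      (c.degree < (n : WithBot ℕ) ∧ c.eval 1 = 0 ∧ (aeval β) c = 0) := by
    intro c
    rw [cyclicCode, Submodule.mem_inf, Polynomial.mem_degreeLT,
      Submodule.restrictScalars_mem, hspan, Ideal.mem_span_singleton, hgc]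
  -- lower bound on weight
  have hlow : ∀ c : F[X], c ∈ cyclicCode F n g → c ≠ 0 → 3 ≤ c.support.card := by
    intro c hcmem hc0
    obtain ⟨hdeg, he1, heβ⟩ := (hmem c).1 hcmem
    by_contra hcon
    push_neg at hcon
    have h2 : c.support.card = 0 ∨ c.support.card = 1 ∨ c.support.card = 2 := by omega
    rcases h2 with h2 | h2 | h2
    · rw [Finset.card_eq_zero, Polynomial.support_eq_empty] at h2
      exact hc0 h2
    · obtain ⟨k, a, ha, rfl⟩ := Polynomial.card_support_eq_one.1 h2
      simp only [eval_mul, eval_C, eval_pow, eval_X, one_pow, mul_one] at he1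
      exact ha he1
    · obtain ⟨k, l, hkl, a, b, ha, hb, rfl⟩ := Polynomial.card_support_eq_two.1 h2
      simp only [eval_add, eval_mul, eval_C, eval_pow, eval_X, one_pow, mul_one] at he1
      have hba : b = -a := by linear_combination he1
      have hlltn : l < n := by
        have hcoeff : (C a * X ^ k + C b * X ^ l).coeff l ≠ 0 := by
          simp [coeff_X_pow, hkl.ne', hb]
        have := le_degree_of_ne_zero hcoeff
        have h3 := lt_of_le_of_lt this hdeg
        exact_mod_cast h3
      have heq : (algebraMap F K a) * β ^ k = (algebraMap F K a) * β ^ l := by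
        simp only [map_add, map_mul, map_pow, aeval_C, aeval_X] at heβ
        rw [hba, map_neg] at heβ
        linear_combination heβ
      have hβkl : β ^ k = β ^ l :=
        mul_left_cancel₀ ((map_ne_zero (algebraMap F K)).2 ha) heq
      have := hβ.pow_inj (by omega) (by omega) hβkl
      omega
  -- dimension
  have hdim : Module.finrank F (cyclicCode F n g) = n - m - 1 := by
    have e : cyclicCode F n g
        = (Polynomial.degreeLT F n ⊓
            Submodule.restrictScalars F (Ideal.span ({g} : Set F[X]))) := by
      rw [cyclicCode, hspan]
    rw [e, code_finrank n g hg0 (by rw [hgdeg]; omega), hgdeg]; omega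
  -- β is not in the image of F
  have hβF : ∀ a : F, β ≠ algebraMap F K a := by
    intro a h
    have ha : a ≠ 0 := by rintro rfl; rw [map_zero] at h; exact hβ0 h
    have h2 : a ^ (q - 1) = 1 := by
      rw [← hq]; exact FiniteField.pow_card_sub_one_eq_one a ha
    have h1 : β ^ (q - 1) = 1 := by rw [h, ← map_pow, h2, map_one]
    have h3 := (hβ.pow_eq_one_iff_dvd _).1 h1
    have h4 := Nat.le_of_dvd (by omega) h3
    have h5 : 4 * q ≤ q * q := Nat.mul_le_mul_right q hq4
    have h6 : q * q ≤ q ^ m := by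
      rw [← pow_two]; exact Nat.pow_le_pow_right (by omega) hm
    omega
  -- choose b1
  have hb1ex : ∃ b1 : F, b1 ≠ 0 ∧ b1 ≠ -1 := by
    by_contra hcon
    push_neg at hcon
    have hsub : (Finset.univ : Finset F) ⊆ {0, -1} := by
      intro x _
      rcases eq_or_ne x 0 with rfl | hx
      · simp
      · simp [hcon x hx]
    have hle := Finset.card_le_card hsub
    have hc2 : ({0, -1} : Finset F).card ≤ 2 :=
      le_trans (Finset.card_insert_le _ _) (by simp)
    rw [Finset.card_univ, hq] at hle
    omega
  obtain ⟨b1, hb10, hb1n⟩ := hb1ex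
  set b2 : F := -(1 + b1) with hb2def
  have hb20 : b2 ≠ 0 := by
    rw [hb2def, neg_ne_zero]
    intro h
    exact hb1n (eq_neg_of_add_eq_zero_right h)
  set B1 := algebraMap F K b1 with hB1def
  set B2 := algebraMap F K b2 with hB2def
  have hB10 : B1 ≠ 0 := (_root_.map_ne_zero (algebraMap F K)).2 hb10
  have hB20 : B2 ≠ 0 := (_root_.map_ne_zero (algebraMap F K)).2 hb20
  set y : K := -(1 + B2 * β⁻¹) * B1⁻¹ with hy
  have hy0 : y ≠ 0 := by
    rw [hy]
    apply mul_ne_zero _ (inv_ne_zero hB10)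
    rw [neg_ne_zero]
    intro hcontra
    apply hβF (-b2)
    rw [map_neg, ← hB2def]
    have h2 : β * (1 + B2 * β⁻¹) = 0 := by rw [hcontra, mul_zero]
    rw [mul_add, mul_one, mul_comm B2 β⁻¹, mul_inv_cancel_left₀ hβ0] at h2
    exact eq_neg_of_add_eq_zero_left h2
  obtain ⟨i, hilt, hfi⟩ := hsurj y hy0
  set t : ℕ := q ^ m - 2 with ht
  have hβinv : β ^ t = β⁻¹ := by
    apply eq_inv_of_mul_eq_one_left
    rw [← pow_succ]
    rw [ht]
    convert hβn using 2
    omega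
  set c : F[X] := 1 + C b1 * X ^ i + C b2 * X ^ t with hc
  have hceval1 : c.eval 1 = 0 := by
    simp only [hc, eval_add, eval_one, eval_mul, eval_C, eval_pow, eval_X, one_pow, mul_one]
    rw [hb2def]; ring
  have hcaevalβ : (aeval β) c = 0 := by
    simp only [hc, map_add, map_one, map_mul, map_pow, aeval_C, aeval_X]
    rw [hβinv, hfi, hy, ← hB1def, ← hB2def]
    field_simp
    ring
  have hcdeg : c.degree < (n : WithBot ℕ) := by
    have hit : i ≤ t := by omega
    have h1 : c.degree ≤ (t : WithBot ℕ) := by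
      rw [hc]
      refine le_trans (degree_add_le _ _) (max_le (le_trans (degree_add_le _ _) (max_le ?_ ?_)) ?_)
      · rw [degree_one]
        exact_mod_cast (WithBot.coe_le_coe.2 (Nat.zero_le t) : ((0:ℕ) : WithBot ℕ) ≤ (t : WithBot ℕ))
      · rw [degree_C_mul_X_pow i hb10]
        exact_mod_cast hit
      · rw [degree_C_mul_X_pow t hb20]
    refine lt_of_le_of_lt h1 ?_
    exact_mod_cast (by omega : t < n)
  have hcmem : c ∈ cyclicCode F n g := (hmem c).2 ⟨hcdeg, hceval1, hcaevalβ⟩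
  have ht0 : t ≠ 0 := by omega
  -- i ≠ 0
  have hi0 : i ≠ 0 := by
    intro h0
    have hcoll : c = C (1 + b1) + C b2 * X ^ t := by
      rw [hc, h0]; simp only [pow_zero, mul_one, C_add, C_1]; try ring
    have hsupp : c.support ⊆ {0, t} := by
      rw [hcoll]
      refine Finset.Subset.trans support_add (Finset.union_subset ?_ ?_)
      · exact Finset.Subset.trans (support_C_subset _) (by simp)
      · exact Finset.Subset.trans (support_C_mul_X_pow' _ _) (by simp)
    have hcard : c.support.card ≤ 2 :=
      le_trans (Finset.card_le_card hsupp) (le_trans (Finset.card_insert_le _ _) (by simp))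
    have h2 : c.coeff t = b2 := by
      rw [hcoll]; simp [coeff_C, coeff_one, ht0, coeff_X_pow]
    have hcne : c ≠ 0 := by
      intro h; rw [h, coeff_zero] at h2; exact hb20 h2.symm
    have := hlow c hcmem hcne
    omega
  -- i ≠ t
  have hit : i ≠ t := by
    intro h0
    have hcoll : c = C 1 + C (b1 + b2) * X ^ t := by
      rw [hc, h0]; simp only [C_add, C_1]; try ring
    have hsupp : c.support ⊆ {0, t} := by
      rw [hcoll]
      refine Finset.Subset.trans support_add (Finset.union_subset ?_ ?_)
      · exact Finset.Subset.trans (support_C_subset _) (by simp)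
      · exact Finset.Subset.trans (support_C_mul_X_pow' _ _) (by simp)
    have hcard : c.support.card ≤ 2 :=
      le_trans (Finset.card_le_card hsupp) (le_trans (Finset.card_insert_le _ _) (by simp))
    have h2 : c.coeff 0 = 1 := by
      rw [hcoll]; simp [coeff_C, coeff_one, coeff_X_pow, Ne.symm ht0]
    have hcne : c ≠ 0 := by
      intro h; rw [h, coeff_zero] at h2; exact one_ne_zero h2.symm
    have := hlow c hcmem hcne
    omega
  -- exact support
  have hc3 : c = C 1 * X ^ 0 + C b1 * X ^ i + C b2 * X ^ t := by
    rw [hc]; simp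
  have hcard3 : c.support.card = 3 := by
    rw [hc3]
    exact card_support_trinomial (by omega) (by omega) one_ne_zero hb10 hb20
  have hc0 : c ≠ 0 := by
    intro h; rw [h] at hcard3; simp at hcard3
  -- min distance
  have h3mem : (3:ℕ) ∈ {w | ∃ c ∈ cyclicCode F n g, c ≠ 0 ∧ c.support.card = w} :=
    ⟨c, hcmem, hc0, hcard3⟩
  have hmd : minDist (cyclicCode F n g) = 3 := by
    rw [minDist]
    apply le_antisymm (Nat.sInf_le h3mem)
    apply le_csInf ⟨3, h3mem⟩
    rintro w ⟨d, hd, hd0, rfl⟩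
    exact hlow d hd hd0
  exact ⟨hdim, hmd, i, b1, b2, hb10, hb20, hcmem, hcard3⟩
end

section
/- Let q ≥ 4 be a power of 2, let m ≥ 2 be an integer, n = (q^m − 1)/(q − 1), and let β be a primitive n-th root of unity in F_{q^m}. Then the minimal polynomial m_β(x) of β over F_q has degree m, and the cyclic code of length 2n over F_q with generator polynomial (x−1)^2 m_β(x) has dimension 2n − m − 2 and minimum distance d satisfying 3 ≤ d ≤ 4. -/
/-!
Since `q` is even, `n = 1 + q + ⋯ + q^(m-1)` is odd and exceeds `q^(m-1)`. The field
`F_q(β)` has `q^d` elements, `d = deg m_β`, so `n ∣ q^d - 1`, which forces `d = m`.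

In characteristic 2, `x^(2n) - 1 = (x^n - 1)^2`; as `m_β ∣ x^n - 1` is coprime to `x - 1`, the
generator `(x-1)^2 m_β` divides `(x-1)(x^n-1)`, a codeword of weight 4, which in turn divides
`x^(2n) - 1`. A nonzero codeword of weight at most 2 has a double root at 1 and vanishes at `β`.
A monomial does not vanish at 1; a binomial `a x^k + b x^j` (`k < j < 2n`) vanishing at 1 and `β`
is `a (x^k - x^(k+n))`, whose derivative at 1 is `-n a ≠ 0` because `n` is odd.
-/

open Polynomial

open IntermediateField

theorem pow_pred_lt_sum_range_pow (q : ℕ) {m : ℕ} (hm : 2 ≤ m) :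
    q ^ (m - 1) < ∑ i ∈ Finset.range m, q ^ i := by
  obtain ⟨k, rfl⟩ := Nat.exists_eq_add_of_le' hm
  rw [Finset.sum_range_succ, Finset.sum_range_succ']
  simp

theorem odd_sum_range_pow {q : ℕ} (hq : Even q) {m : ℕ} (hm : m ≠ 0) :
    Odd (∑ i ∈ Finset.range m, q ^ i) := by
  obtain ⟨k, rfl⟩ := Nat.exists_eq_succ_of_ne_zero hm
  rw [Finset.sum_range_succ', pow_zero]
  refine Even.add_one (Finset.even_sum _ fun i _ => ?_)
  rw [pow_succ]
  exact hq.mul_left _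

theorem X_pow_sub_one_ne_zero {R : Type*} [Ring R] [Nontrivial R] {N : ℕ} (hN : N ≠ 0) :
    (X ^ N - 1 : R[X]) ≠ 0 := by
  simpa using X_pow_sub_C_ne_zero (Nat.pos_of_ne_zero hN) (1 : R)

theorem X_pow_two_mul_sub_one_eq_sq {R : Type*} [CommRing R] [CharP R 2] (n : ℕ) :
    (X ^ (2 * n) - 1 : R[X]) = (X ^ n - 1) ^ 2 := by
  rw [sub_pow_char, one_pow, ← pow_mul, mul_comm]

theorem card_support_X_pow_sub_C_le {R : Type*} [Ring R] (k : ℕ) (a : R) :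
    (X ^ k - C a).support.card ≤ 2 := by
  have h : X ^ k - C a = C 1 * X ^ k + C (-a) * X ^ 0 := by simp [sub_eq_add_neg]
  rw [h]
  exact (Finset.card_le_card (support_binomial_subset _ _ _ _)).trans Finset.card_le_two

theorem isCoprime_X_sub_one_of_irreducible {F : Type*} [Field F] {P : F[X]} (hP : Irreducible P)
    (hdeg : P.natDegree ≠ 1) : IsCoprime (X - 1) P := by
  rw [← C_1, (irreducible_X_sub_C 1).coprime_iff_not_dvd, dvd_iff_isRoot]
  intro h
  have h1 := degree_eq_one_of_irreducible_of_root hP h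
  rw [degree_eq_natDegree hP.ne_zero] at h1
  exact hdeg (by exact_mod_cast h1)

section CyclicCode

variable {F : Type*} [Field F] {N : ℕ} {g : F[X]}

theorem mem_cyclicCode_iff (hg : g ∣ X ^ N - 1) {c : F[X]} :
    c ∈ cyclicCode F N g ↔ c.degree < N ∧ g ∣ c := by
  rw [cyclicCode, Submodule.mem_inf, mem_degreeLT, Ideal.span_pair_eq_span_left_iff_dvd.2 hg,
    Submodule.restrictScalars_mem, Ideal.mem_span_singleton]

theorem degree_mul_lt_iff_of_natDegree_le {p : F[X]} (hg : g ≠ 0) (hgN : g.natDegree ≤ N) :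
    (g * p).degree < N ↔ p.degree < ↑(N - g.natDegree) := by
  rcases eq_or_ne p 0 with rfl | hp
  · simp
  · rw [← natDegree_lt_iff_degree_lt (mul_ne_zero hg hp), ← natDegree_lt_iff_degree_lt hp,
      natDegree_mul hg hp]
    omega

theorem cyclicCode_eq_map (hN : N ≠ 0) (hg : g ∣ X ^ N - 1) :
    cyclicCode F N g = (degreeLT F (N - g.natDegree)).map (LinearMap.mulLeft F g) := by
  have hg0 : g ≠ 0 := ne_zero_of_dvd_ne_zero (X_pow_sub_one_ne_zero hN) hg
  have hgN : g.natDegree ≤ N := by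
    have h := natDegree_le_of_dvd hg (X_pow_sub_one_ne_zero hN)
    rwa [← C_1, natDegree_X_pow_sub_C] at h
  ext c
  simp only [mem_cyclicCode_iff hg, Submodule.mem_map, mem_degreeLT, LinearMap.mulLeft_apply]
  constructor
  · rintro ⟨hc, p, rfl⟩
    exact ⟨p, (degree_mul_lt_iff_of_natDegree_le hg0 hgN).1 hc, rfl⟩
  · rintro ⟨p, hp, rfl⟩
    exact ⟨(degree_mul_lt_iff_of_natDegree_le hg0 hgN).2 hp, dvd_mul_right g p⟩

theorem finrank_cyclicCode (hN : N ≠ 0) (hg : g ∣ X ^ N - 1) :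
    Module.finrank F (cyclicCode F N g) = N - g.natDegree := by
  have hg0 : g ≠ 0 := ne_zero_of_dvd_ne_zero (X_pow_sub_one_ne_zero hN) hg
  rw [cyclicCode_eq_map hN hg,
    ← (Submodule.equivMapOfInjective _ (mul_right_injective₀ hg0) _).finrank_eq,
    (degreeLTEquiv F _).finrank_eq, Module.finrank_fin_fun]

theorem minDist_le_card_support {C : Submodule F F[X]} {c : F[X]} (hc : c ∈ C) (hc0 : c ≠ 0) :
    minDist C ≤ c.support.card :=
  Nat.sInf_le ⟨c, hc, hc0, rfl⟩

theorem le_minDist {C : Submodule F F[X]} {w : ℕ} (hC : C ≠ ⊥)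
    (h : ∀ c ∈ C, c ≠ 0 → w ≤ c.support.card) : w ≤ minDist C := by
  obtain ⟨c, hc, hc0⟩ := (Submodule.ne_bot_iff C).1 hC
  exact le_csInf ⟨_, c, hc, hc0, rfl⟩ (by rintro _ ⟨c, hc, hc0, rfl⟩; exact h c hc hc0)

end CyclicCode

theorem IsPrimitiveRoot.eq_add_of_pow_eq_pow {M : Type*} [CommMonoid M] {β : M} {n k j : ℕ}
    (hβ : IsPrimitiveRoot β n) (hkj : k < j) (hj : j < 2 * n) (h : β ^ k = β ^ j) :
    j = k + n := by
  obtain ⟨t, ht⟩ : n ∣ j - k := by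
    rwa [← Nat.modEq_iff_dvd' hkj.le, hβ.eq_orderOf,
      ← (hβ.isOfFinOrder (by omega)).pow_eq_pow_iff_modEq]
  rcases t with _ | _ | t
  · omega
  · omega
  · have : n * (t + 1 + 1) = n * t + 2 * n := by ring
    omega

theorem three_le_card_support_of_sq_dvd_of_aeval_eq_zero {F K : Type*} [Field F] [CommRing K]
    [IsDomain K] [Algebra F K] {β : K} {n : ℕ} (hβ : IsPrimitiveRoot β n) (hn : (n : F) ≠ 0)
    {c : F[X]} (hc : c ≠ 0) (hdeg : c.natDegree < 2 * n) (hsq : (X - 1) ^ 2 ∣ c)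
    (hβc : aeval β c = 0) : 3 ≤ c.support.card := by
  obtain ⟨h1, h1'⟩ : c.IsRoot 1 ∧ (derivative c).IsRoot 1 :=
    (one_lt_rootMultiplicity_iff_isRoot hc).1 ((le_rootMultiplicity_iff hc).2 (by rwa [C_1]))
  by_contra! hlt
  have hpos : 0 < c.support.card := Finset.card_pos.2 (support_nonempty.2 hc)
  rcases (by omega : c.support.card = 1 ∨ c.support.card = 2) with hw | hw
  · obtain ⟨k, x, hx, rfl⟩ := card_support_eq_one.1 hw
    simp [hx] at h1
  · obtain ⟨k, j, hkj, x, y, hx, hy, rfl⟩ := card_support_eq_two.1 hw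
    have hj : j < 2 * n := by
      refine lt_of_le_of_lt (le_natDegree_of_ne_zero ?_) hdeg
      simpa [coeff_X_pow, hkj.ne'] using hy
    obtain rfl : y = -x := by
      simpa [eq_neg_iff_add_eq_zero, add_comm] using h1
    have hβkj : β ^ k = β ^ j := by
      have h : algebraMap F K x * (β ^ k - β ^ j) = 0 := by
        simp only [map_add, map_mul, map_pow, aeval_C, aeval_X, map_neg] at hβc
        linear_combination hβc
      exact sub_eq_zero.1 ((mul_eq_zero.1 h).resolve_left ((_root_.map_ne_zero _).2 hx))
    obtain rfl := hβ.eq_add_of_pow_eq_pow hkj hj hβkj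
    simp only [IsRoot.def, derivative_add, derivative_C_mul_X_pow, eval_add, eval_mul, eval_C,
      eval_pow, eval_X, one_pow, mul_one, Nat.cast_add] at h1'
    have h : x * n = 0 := by linear_combination -h1'
    exact hn ((mul_eq_zero.1 h).resolve_left hx)

theorem IsPrimitiveRoot.dvd_card_pow_natDegree_minpoly_sub_one {F K : Type*} [Field F]
    [Fintype F] [Field K] [Algebra F K] {β : K} {n : ℕ} (hβ : IsPrimitiveRoot β n) (hn : n ≠ 0)
    (hint : IsIntegral F β) :
    n ∣ Fintype.card F ^ (minpoly F β).natDegree - 1 := by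
  have : FiniteDimensional F F⟮β⟯ := adjoin.finiteDimensional hint
  have : Finite F⟮β⟯ := Module.finite_of_finite F
  have : Fintype F⟮β⟯ := Fintype.ofFinite _
  have hcard : Fintype.card F⟮β⟯ = Fintype.card F ^ (minpoly F β).natDegree := by
    rw [Module.card_eq_pow_finrank (K := F), adjoin.finrank hint]
  have hgen : AdjoinSimple.gen F β ≠ 0 := by
    rw [Ne, ← (algebraMap F⟮β⟯ K).injective.eq_iff, AdjoinSimple.algebraMap_gen, map_zero]
    exact hβ.ne_zero hn
  have h := congrArg (algebraMap F⟮β⟯ K) (FiniteField.pow_card_sub_one_eq_one _ hgen)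
  rw [map_pow, map_one, AdjoinSimple.algebraMap_gen, hcard] at h
  exact hβ.dvd_of_pow_eq_one _ h

theorem natDegree_minpoly_eq_of_pow_pred_lt {F K : Type*} [Field F] [Fintype F] [Field K]
    [Fintype K] [Algebra F K] {m n : ℕ} (hK : Fintype.card K = Fintype.card F ^ m) {β : K}
    (hβ : IsPrimitiveRoot β n) (hn : Fintype.card F ^ (m - 1) < n) :
    (minpoly F β).natDegree = m := by
  have hq : 1 < Fintype.card F := Fintype.one_lt_card
  have hint : IsIntegral F β := Algebra.IsIntegral.isIntegral β
  have hfinrank : Module.finrank F K = m := by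
    rw [Module.card_eq_pow_finrank (K := F)] at hK
    exact Nat.pow_right_injective hq hK
  have hle : (minpoly F β).natDegree ≤ m := hfinrank ▸ minpoly.natDegree_le β
  have hdvd := hβ.dvd_card_pow_natDegree_minpoly_sub_one (by omega) hint
  have hpos : 0 < Fintype.card F ^ (minpoly F β).natDegree - 1 := by
    have := Nat.one_lt_pow (minpoly.natDegree_pos hint).ne' hq
    omega
  by_contra hne
  have : Fintype.card F ^ (minpoly F β).natDegree ≤ Fintype.card F ^ (m - 1) :=
    Nat.pow_le_pow_right hq.le (by omega)
  have := Nat.le_of_dvd hpos hdvd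
  omega

section RepeatedRootCode

variable {F : Type*} [Field F] {n : ℕ} {P : F[X]}

theorem sq_X_sub_one_mul_dvd_mul_X_pow_sub_one (hP : P ∣ X ^ n - 1)
    (hcop : IsCoprime (X - 1) P) : (X - 1) ^ 2 * P ∣ (X - 1) * (X ^ n - 1) := by
  rw [sq, mul_assoc]
  exact mul_dvd_mul_left _ (hcop.mul_dvd (sub_one_dvd_pow_sub_one X n) hP)

theorem X_sub_one_mul_X_pow_sub_one_ne_zero (hn : n ≠ 0) : ((X - 1) * (X ^ n - 1) : F[X]) ≠ 0 :=
  mul_ne_zero (by simpa using X_sub_C_ne_zero (1 : F)) (X_pow_sub_one_ne_zero hn)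

variable [CharP F 2]

theorem sq_X_sub_one_mul_dvd_X_pow_two_mul_sub_one (hP : P ∣ X ^ n - 1)
    (hcop : IsCoprime (X - 1) P) : (X - 1) ^ 2 * P ∣ X ^ (2 * n) - 1 := by
  refine (sq_X_sub_one_mul_dvd_mul_X_pow_sub_one hP hcop).trans ?_
  rw [X_pow_two_mul_sub_one_eq_sq, sq]
  exact mul_dvd_mul_right (sub_one_dvd_pow_sub_one X n) _

theorem finrank_cyclicCode_sq_X_sub_one_mul (hn : n ≠ 0) (hP : P ∣ X ^ n - 1)
    (hcop : IsCoprime (X - 1) P) :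
    Module.finrank F (cyclicCode F (2 * n) ((X - 1) ^ 2 * P)) = 2 * n - P.natDegree - 2 := by
  have hP0 : P ≠ 0 := ne_zero_of_dvd_ne_zero (X_pow_sub_one_ne_zero hn) hP
  rw [finrank_cyclicCode (by omega) (sq_X_sub_one_mul_dvd_X_pow_two_mul_sub_one hP hcop), ← C_1,
    natDegree_mul (pow_ne_zero 2 (X_sub_C_ne_zero 1)) hP0, natDegree_pow, natDegree_X_sub_C]
  omega

theorem X_sub_one_mul_X_pow_sub_one_mem_cyclicCode (hn : 1 < n) (hP : P ∣ X ^ n - 1)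
    (hcop : IsCoprime (X - 1) P) :
    (X - 1) * (X ^ n - 1) ∈ cyclicCode F (2 * n) ((X - 1) ^ 2 * P) := by
  rw [mem_cyclicCode_iff (sq_X_sub_one_mul_dvd_X_pow_two_mul_sub_one hP hcop)]
  refine ⟨?_, sq_X_sub_one_mul_dvd_mul_X_pow_sub_one hP hcop⟩
  rw [← C_1, degree_mul, degree_X_sub_C, degree_X_pow_sub_C (by omega)]
  norm_cast
  omega

theorem minDist_cyclicCode_sq_X_sub_one_mul_le_four (hn : 1 < n) (hP : P ∣ X ^ n - 1)
    (hcop : IsCoprime (X - 1) P) : minDist (cyclicCode F (2 * n) ((X - 1) ^ 2 * P)) ≤ 4 := by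
  refine (minDist_le_card_support (X_sub_one_mul_X_pow_sub_one_mem_cyclicCode hn hP hcop)
    (X_sub_one_mul_X_pow_sub_one_ne_zero (by omega))).trans ?_
  rw [← C_1]
  refine card_support_mul_le.trans ?_
  have h1 := card_support_X_pow_sub_C_le 1 (1 : F)
  have h2 := card_support_X_pow_sub_C_le n (1 : F)
  rw [pow_one] at h1
  nlinarith

theorem three_le_minDist_cyclicCode_sq_X_sub_one_mul {K : Type*} [CommRing K] [IsDomain K]
    [Algebra F K] {β : K} (hβ : IsPrimitiveRoot β n) (hn : Odd n) (hn1 : 1 < n)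
    (hP : P ∣ X ^ n - 1) (hcop : IsCoprime (X - 1) P) (hPβ : aeval β P = 0) :
    3 ≤ minDist (cyclicCode F (2 * n) ((X - 1) ^ 2 * P)) := by
  have hg := sq_X_sub_one_mul_dvd_X_pow_two_mul_sub_one hP hcop
  refine le_minDist ((Submodule.ne_bot_iff _).2
    ⟨_, X_sub_one_mul_X_pow_sub_one_mem_cyclicCode hn1 hP hcop,
      X_sub_one_mul_X_pow_sub_one_ne_zero (by omega)⟩) fun c hc hc0 => ?_
  obtain ⟨hdeg, r, rfl⟩ := (mem_cyclicCode_iff hg).1 hc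
  refine three_le_card_support_of_sq_dvd_of_aeval_eq_zero hβ ?_ hc0
    ((natDegree_lt_iff_degree_lt hc0).2 hdeg) (Dvd.intro _ (mul_assoc _ _ _).symm) (by simp [hPβ])
  rw [Ne, CharP.cast_eq_zero_iff F 2]
  exact hn.not_two_dvd_nat

end RepeatedRootCode

theorem statement7_general {F K : Type*} [Field F] [Fintype F] [Field K] [Fintype K] [Algebra F K]
    (q : ℕ) (hq : Fintype.card F = q) (hq2 : ∃ e : ℕ, q = 2 ^ e)
    (m : ℕ) (hm : 2 ≤ m) (hK : Fintype.card K = q ^ m)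
    (n : ℕ) (hn : n = (q ^ m - 1) / (q - 1))
    (β : K) (hβ : IsPrimitiveRoot β n) :
    (minpoly F β).natDegree = m ∧
    Module.finrank F (cyclicCode F (2 * n) ((X - 1) ^ 2 * minpoly F β)) = 2 * n - m - 2 ∧
    3 ≤ minDist (cyclicCode F (2 * n) ((X - 1) ^ 2 * minpoly F β)) ∧
    minDist (cyclicCode F (2 * n) ((X - 1) ^ 2 * minpoly F β)) ≤ 4 := by
  obtain ⟨e, he⟩ := hq2
  have : CharP F 2 := charP_of_card_eq_prime_pow (hq.trans he)
  have hq1 : 2 ≤ q := hq ▸ Fintype.one_lt_card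
  have hq_even : Even q := he ▸ Nat.even_pow.2 ⟨even_two, by rintro rfl; omega⟩
  have hn_sum : n = ∑ i ∈ Finset.range m, q ^ i := hn.trans (Nat.geomSum_eq hq1 m).symm
  have hlt : q ^ (m - 1) < n := hn_sum ▸ pow_pred_lt_sum_range_pow q hm
  have hodd : Odd n := hn_sum ▸ odd_sum_range_pow hq_even (by omega)
  have hn1 : 1 < n := lt_of_le_of_lt (Nat.one_le_pow _ _ (by omega)) hlt
  have hdeg : (minpoly F β).natDegree = m :=
    natDegree_minpoly_eq_of_pow_pred_lt (hq ▸ hK) hβ (hq ▸ hlt)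
  have hP : minpoly F β ∣ X ^ n - 1 := minpoly.dvd F β (by simp [hβ.pow_eq_one])
  have hcop : IsCoprime (X - 1) (minpoly F β) :=
    isCoprime_X_sub_one_of_irreducible (minpoly.irreducible (Algebra.IsIntegral.isIntegral β))
      (by omega)
  refine ⟨hdeg, ?_, three_le_minDist_cyclicCode_sq_X_sub_one_mul hβ hodd hn1 hP hcop
    (minpoly.aeval F β), minDist_cyclicCode_sq_X_sub_one_mul_le_four hn1 hP hcop⟩
  rw [finrank_cyclicCode_sq_X_sub_one_mul (by omega) hP hcop, hdeg]

/-- for `q ≥ 4` a power of `2`, `m ≥ 2`, `n = (q^m - 1)/(q - 1)` and `β` a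
primitive `n`-th root of unity in `F_{q^m}`, the minimal polynomial `m_β(x)` over `F_q`
has degree `m`, and the cyclic code of length `2n` over `F_q` with generator polynomial
`(x-1)^2 m_β(x)` has dimension `2n - m - 2` and minimum distance `d` with `3 ≤ d ≤ 4`. -/
theorem statement7 {F K : Type*} [Field F] [Fintype F] [Field K] [Fintype K] [Algebra F K]
    (q : ℕ) (hq : Fintype.card F = q) (hq2 : ∃ e : ℕ, q = 2 ^ e) (hq4 : 4 ≤ q)
    (m : ℕ) (hm : 2 ≤ m) (hK : Fintype.card K = q ^ m)
    (n : ℕ) (hn : n = (q ^ m - 1) / (q - 1))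
    (β : K) (hβ : IsPrimitiveRoot β n) :
    (minpoly F β).natDegree = m ∧
    Module.finrank F (cyclicCode F (2 * n) ((X - 1) ^ 2 * minpoly F β)) = 2 * n - m - 2 ∧
    3 ≤ minDist (cyclicCode F (2 * n) ((X - 1) ^ 2 * minpoly F β)) ∧
    minDist (cyclicCode F (2 * n) ((X - 1) ^ 2 * minpoly F β)) ≤ 4 :=
  statement7_general q hq hq2 m hm hK n hn β hβ
end
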